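/- arXiv:2007.02301 — 6 statements merged into one kernel-verified Lean document; each statement's English description precedes it below -/
import Mathlib

section
/- As q → ∞ over prime powers, the Erdős sum F(I_q) = ∑_{n=1}^∞ π'_q(n)/(n·q^n) converges to π²/6. -/
/-!
Since `X ^ q ^ n - X` is squarefree and its monic irreducible factors are exactly those of degree
dividing `n`, Gauss's formula `∑_{d ∣ n} d π_q(d) = q ^ n` holds. Bounding the terms with `d < n`
by the geometric sum `∑_{d < n} q ^ d ≤ q ^ n / (q - 1)` gives
`1 - 1 / (q - 1) ≤ n π_q(n) / q ^ n ≤ 1`, so the `n`-th term of the Erdős sum lies between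
`(1 - 1 / (q - 1)) / n²` and `1 / n²`, and the sum differs from `ζ(2) = π² / 6` by at most
`(π² / 6) / (q - 1)`.
-/

open Polynomial

/-- The number of monic irreducible polynomials of degree `n` over a finite field `F`. -/
noncomputable def numIrred (F : Type*) [Field F] [Fintype F] (n : ℕ) : ℕ :=
  Nat.card {f : F[X] // f.Monic ∧ Irreducible f ∧ f.natDegree = n}

namespace FiniteField

open UniqueFactorizationMonoid

variable {F : Type*} [Field F] [Fintype F]

theorem squarefree_X_pow_card_pow_sub_X {n : ℕ} (hn : n ≠ 0) :
    Squarefree (X ^ Fintype.card F ^ n - X : F[X]) := by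
  obtain ⟨p, _⟩ := CharP.exists F
  have : Fact p.Prime := ⟨CharP.char_is_prime F p⟩
  obtain ⟨k, -, hk⟩ := FiniteField.card F p
  refine (galois_poly_separable p _ ?_).squarefree
  rw [hk, ← pow_mul]
  exact dvd_pow_self p (mul_ne_zero k.ne_zero hn)

theorem mem_normalizedFactors_X_pow_card_pow_sub_X [DecidableEq F] {n : ℕ} (hn : n ≠ 0)
    {f : F[X]} :
    f ∈ normalizedFactors (X ^ Fintype.card F ^ n - X) ↔
      f.Monic ∧ Irreducible f ∧ f.natDegree ∣ n := by
  rw [Polynomial.mem_normalizedFactors_iff (X_pow_card_pow_sub_X_ne_zero F hn Fintype.one_lt_card),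
    ← Nat.card_eq_fintype_card]
  constructor
  · rintro ⟨hirr, hmonic, hdvd⟩
    exact ⟨hmonic, hirr, hirr.natDegree_dvd_iff_dvd_X_pow_card_pow_sub_X.mpr hdvd⟩
  · rintro ⟨hmonic, hirr, hdvd⟩
    exact ⟨hirr, hmonic, hirr.natDegree_dvd_iff_dvd_X_pow_card_pow_sub_X.mp hdvd⟩

theorem sum_divisors_mul_numIrred {n : ℕ} (hn : n ≠ 0) :
    ∑ d ∈ n.divisors, d * numIrred F d = Fintype.card F ^ n := by
  classical
  set P : F[X] := X ^ Fintype.card F ^ n - X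
  have hP0 : P ≠ 0 := X_pow_card_pow_sub_X_ne_zero F hn Fintype.one_lt_card
  set s := (normalizedFactors P).toFinset
  have hs (f : F[X]) : f ∈ s ↔ f.Monic ∧ Irreducible f ∧ f.natDegree ∣ n := by
    rw [Multiset.mem_toFinset, mem_normalizedFactors_X_pow_card_pow_sub_X hn]
  have hnodup : (normalizedFactors P).Nodup :=
    (squarefree_iff_nodup_normalizedFactors hP0).mp (squarefree_X_pow_card_pow_sub_X hn)
  have hdeg : ∑ f ∈ s, f.natDegree = Fintype.card F ^ n := by
    rw [Finset.sum_eq_multiset_sum, Multiset.toFinset_val, Multiset.dedup_eq_self.mpr hnodup,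
      ← natDegree_multiset_prod _ (zero_notMem_normalizedFactors _), prod_normalizedFactors_eq hP0,
      natDegree_eq_of_degree_eq degree_normalize,
      X_pow_card_pow_sub_X_natDegree_eq F hn Fintype.one_lt_card]
  have hfiber (d : ℕ) (hd : d ∈ n.divisors) :
      ∑ f ∈ s with f.natDegree = d, f.natDegree = d * numIrred F d := by
    rw [Finset.sum_congr rfl (fun f hf => (Finset.mem_filter.mp hf).2), Finset.sum_const,
      smul_eq_mul, mul_comm, numIrred, ← Nat.card_eq_finsetCard]
    refine congrArg _ (Nat.card_congr (Equiv.subtypeEquivRight fun f => ?_))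
    rw [Finset.mem_filter, hs]
    have hdn := Nat.dvd_of_mem_divisors hd
    constructor
    · rintro ⟨⟨hm, hi, -⟩, rfl⟩; exact ⟨hm, hi, rfl⟩
    · rintro ⟨hm, hi, rfl⟩; exact ⟨⟨hm, hi, hdn⟩, rfl⟩
  rw [← hdeg, ← Finset.sum_fiberwise_of_maps_to (g := natDegree) (t := n.divisors)
    fun f hf => Nat.mem_divisors.mpr ⟨((hs f).mp hf).2.2, hn⟩]
  exact (Finset.sum_congr rfl hfiber).symm

theorem mul_numIrred_le (n : ℕ) : n * numIrred F n ≤ Fintype.card F ^ n := by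
  rcases eq_or_ne n 0 with rfl | hn
  · simp
  rw [← sum_divisors_mul_numIrred hn]
  exact Finset.single_le_sum (f := fun d => d * numIrred F d) (fun d _ => Nat.zero_le _)
    (Nat.mem_divisors_self n hn)

theorem card_pow_le_mul_numIrred_add_geom_sum {n : ℕ} (hn : n ≠ 0) :
    Fintype.card F ^ n ≤ n * numIrred F n + ∑ d ∈ Finset.range n, Fintype.card F ^ d := by
  rw [← sum_divisors_mul_numIrred hn, ← Nat.cons_self_properDivisors hn, Finset.sum_cons]
  gcongr
  calc ∑ d ∈ n.properDivisors, d * numIrred F d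
      ≤ ∑ d ∈ n.properDivisors, Fintype.card F ^ d :=
        Finset.sum_le_sum fun d _ => mul_numIrred_le d
    _ ≤ ∑ d ∈ Finset.range n, Fintype.card F ^ d :=
        Finset.sum_le_sum_of_subset fun d hd =>
          Finset.mem_range.mpr (Nat.mem_properDivisors.mp hd).2

theorem one_sub_inv_mul_card_pow_le_mul_numIrred {n : ℕ} (hn : n ≠ 0) :
    (1 - 1 / ((Fintype.card F : ℝ) - 1)) * (Fintype.card F : ℝ) ^ n ≤ n * numIrred F n := by
  have hq : (1 : ℝ) < Fintype.card F := by exact_mod_cast Fintype.one_lt_card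
  have hcount : (Fintype.card F : ℝ) ^ n
      ≤ n * numIrred F n + ∑ d ∈ Finset.range n, (Fintype.card F : ℝ) ^ d := by
    exact_mod_cast card_pow_le_mul_numIrred_add_geom_sum (F := F) hn
  set q : ℝ := (Fintype.card F : ℝ)
  have hgeom : ∑ d ∈ Finset.range n, q ^ d ≤ q ^ n / (q - 1) := by
    rw [geom_sum_eq hq.ne']
    gcongr
    linarith
  have hsplit : (1 - 1 / (q - 1)) * q ^ n = q ^ n - q ^ n / (q - 1) := by ring
  linarith

end FiniteField

theorem abs_tsum_sub_tsum_le_of_le_of_le {a b : ℕ → ℝ} {δ : ℝ} (hb : Summable b)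
    (ha0 : ∀ n, 0 ≤ a n) (hab : ∀ n, a n ≤ b n) (hba : ∀ n, (1 - δ) * b n ≤ a n) :
    |∑' n, a n - ∑' n, b n| ≤ δ * ∑' n, b n := by
  have ha : Summable a := hb.of_nonneg_of_le ha0 hab
  have hle : ∑' n, a n ≤ ∑' n, b n := ha.tsum_le_tsum hab hb
  have hge : (1 - δ) * ∑' n, b n ≤ ∑' n, a n := by
    rw [← tsum_mul_left]
    exact (hb.mul_left _).tsum_le_tsum hba ha
  rw [abs_sub_comm, abs_of_nonneg (sub_nonneg.mpr hle)]
  linarith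

open Filter Topology Real

theorem hasSum_one_div_nat_add_one_sq :
    HasSum (fun n : ℕ => 1 / ((n : ℝ) + 1) ^ 2) (π ^ 2 / 6) := by
  simpa using (hasSum_nat_add_iff' 1).mpr hasSum_zeta_two

theorem abs_erdosSum_sub_pi_sq_div_six_le (F : Type*) [Field F] [Fintype F] :
    |∑' n : ℕ, (numIrred F (n + 1) : ℝ) / ((n + 1) * (Fintype.card F : ℝ) ^ (n + 1)) - π ^ 2 / 6|
      ≤ 1 / ((Fintype.card F : ℝ) - 1) * (π ^ 2 / 6) := by
  have hterm (n : ℕ) : (numIrred F (n + 1) : ℝ) / ((n + 1) * (Fintype.card F : ℝ) ^ (n + 1))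
      = ((n + 1 : ℕ) * numIrred F (n + 1) / (Fintype.card F : ℝ) ^ (n + 1))
        * (1 / ((n : ℝ) + 1) ^ 2) := by
    have : (Fintype.card F : ℝ) ≠ 0 := by positivity
    push_cast
    field_simp
  rw [← hasSum_one_div_nat_add_one_sq.tsum_eq]
  refine abs_tsum_sub_tsum_le_of_le_of_le hasSum_one_div_nat_add_one_sq.summable
    (fun n => by positivity) (fun n => ?_) (fun n => ?_) <;> rw [hterm]
  · refine mul_le_of_le_one_left (by positivity) ((div_le_one (by positivity)).mpr ?_)
    exact_mod_cast FiniteField.mul_numIrred_le (n + 1)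
  · refine mul_le_mul_of_nonneg_right ((le_div_iff₀ (by positivity)).mpr ?_) (by positivity)
    exact FiniteField.one_sub_inv_mul_card_pow_le_mul_numIrred n.succ_ne_zero

/-- As `q → ∞` over prime powers, the Erdős sum
`F(I_q) = ∑_{n≥1} π'_q(n) / (n qⁿ)` converges to `π²/6`. -/
theorem stmt_2 :
    ∀ ε : ℝ, 0 < ε → ∃ Q : ℕ, ∀ q : ℕ, Q ≤ q → IsPrimePow q →
      ∀ (F : Type) [Field F] [Fintype F], Fintype.card F = q →
        |(∑' n : ℕ, (numIrred F (n + 1) : ℝ) / ((n + 1) * (q : ℝ) ^ (n + 1))) -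
          Real.pi ^ 2 / 6| < ε := by
  intro ε hε
  have hlim : Tendsto (fun q : ℕ => 1 / ((q : ℝ) - 1) * (π ^ 2 / 6)) atTop (𝓝 0) := by
    have h := ((tendsto_const_nhds (x := (1 : ℝ))).div_atTop
      (tendsto_atTop_add_const_right _ (-1) tendsto_natCast_atTop_atTop)).mul_const (π ^ 2 / 6)
    simpa only [zero_mul, ← sub_eq_add_neg] using h
  obtain ⟨Q, hQ⟩ := eventually_atTop.mp (hlim.eventually (gt_mem_nhds hε))
  refine ⟨Q, fun q hq _ F _ _ hF => ?_⟩
  subst hF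
  exact (abs_erdosSum_sub_pi_sq_div_six_le F).trans_lt (hQ _ hq)
end

section
/- For n ≥ 2 and real q ≥ 3, the polynomial ∑_{d|n} (d−n)·q^d·μ(n/d) is bounded below by n/(q−1) + n, and in particular is positive. -/
/-!
The largest proper divisor of `n` is `m = n / p`, where `p` is the least prime factor of `n`.
The term `d = n` vanishes and the term `d = m` equals `(n - m) q^m ≥ (n / 2) q^m`. Every other
divisor lies in `[1, m)` and its term is at least `-n q^d`, so the rest of the sum is at least
`-n (q + ⋯ + q^(m-1)) = -n (q^m - q) / (q - 1)`. For `q ≥ 3` the term `d = m` dominates.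
-/

open Finset ArithmeticFunction

namespace Nat

theorem le_div_minFac_of_mem_properDivisors {n d : ℕ} (hd : d ∈ n.properDivisors) :
    d ≤ n / n.minFac := by
  obtain ⟨⟨k, rfl⟩, hlt⟩ := mem_properDivisors.mp hd
  have hk : 2 ≤ k := by
    by_contra! hk
    interval_cases k <;> simp at hlt
  rw [le_div_iff_mul_le (minFac_pos _)]
  exact Nat.mul_le_mul_left d (minFac_le_of_dvd hk (Dvd.intro_left d rfl))

theorem div_minFac_mem_properDivisors {n : ℕ} (hn : 2 ≤ n) :
    n / n.minFac ∈ n.properDivisors :=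
  mem_properDivisors.mpr
    ⟨Nat.div_dvd_of_dvd (minFac_dvd n), Nat.div_lt_self (by omega) (minFac_prime (by omega)).one_lt⟩

theorem two_mul_div_minFac_le {n : ℕ} (hn : n ≠ 1) : 2 * (n / n.minFac) ≤ n := by
  calc 2 * (n / n.minFac) ≤ n.minFac * (n / n.minFac) :=
        Nat.mul_le_mul_right _ (minFac_prime hn).two_le
    _ = n := Nat.mul_div_cancel' (minFac_dvd n)

theorem properDivisors_erase_div_minFac_subset_Ico (n : ℕ) :
    n.properDivisors.erase (n / n.minFac) ⊆ Ico 1 (n / n.minFac) := by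
  intro d hd
  obtain ⟨hne, hmem⟩ := mem_erase.mp hd
  have hpos : 0 < d := pos_of_mem_properDivisors hmem
  have hle := le_div_minFac_of_mem_properDivisors hmem
  exact mem_Ico.mpr ⟨hpos, by omega⟩

end Nat

theorem sum_pow_le_of_subset_Ico {q : ℝ} (hq : 1 < q) {m : ℕ} (hm : 1 ≤ m) {s : Finset ℕ}
    (hs : s ⊆ Ico 1 m) : ∑ d ∈ s, q ^ d ≤ (q ^ m - q) / (q - 1) := by
  calc ∑ d ∈ s, q ^ d ≤ ∑ d ∈ Ico 1 m, q ^ d :=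
        sum_le_sum_of_subset_of_nonneg hs fun _ _ _ ↦ by positivity
    _ = (q ^ m - q) / (q - 1) := by rw [geom_sum_Ico hq.ne' hm, pow_one]

theorem neg_mul_pow_le_sub_mul_pow_mul {n d : ℕ} (hd : d ≤ n) {q : ℝ} (hq : 0 ≤ q) {c : ℝ}
    (hc : |c| ≤ 1) : -(n * q ^ d) ≤ ((d : ℝ) - n) * q ^ d * c := by
  have hdn : (d : ℝ) ≤ n := by exact_mod_cast hd
  have hqd : 0 ≤ q ^ d := pow_nonneg hq d
  have : |((d : ℝ) - n) * q ^ d * c| ≤ n * q ^ d := by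
    rw [abs_mul, abs_mul, abs_of_nonneg hqd, abs_of_nonpos (by linarith)]
    calc -((d : ℝ) - n) * q ^ d * |c| ≤ n * q ^ d * 1 := by gcongr; linarith
      _ = n * q ^ d := mul_one _
  exact (abs_le.mp this).1

theorem div_sub_one_add_le_of_two_mul_le {n m : ℕ} (hm : 2 * m ≤ n) {q : ℝ} (hq : 3 ≤ q) :
    (n : ℝ) / (q - 1) + n ≤ ((n : ℝ) - m) * q ^ m - n * ((q ^ m - q) / (q - 1)) := by
  have hq1 : 0 < q - 1 := by linarith
  have hmn : 2 * (m : ℝ) ≤ n := by exact_mod_cast hm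
  have hgap : 0 ≤ ((n : ℝ) - m) * (q - 1) - n := by nlinarith
  rw [← sub_nonneg]
  have hdiff : ((n : ℝ) - m) * q ^ m - n * ((q ^ m - q) / (q - 1)) - ((n : ℝ) / (q - 1) + n)
      = q ^ m * (((n : ℝ) - m) * (q - 1) - n) / (q - 1) := by
    field_simp
    ring
  rw [hdiff]
  have := pow_nonneg (by linarith : (0 : ℝ) ≤ q) m
  positivity

theorem sum_divisors_sub_mul_pow_mul_moebius_eq (n : ℕ) (hn : 2 ≤ n) (q : ℝ) :
    ∑ d ∈ n.divisors, ((d : ℝ) - n) * q ^ d * ((moebius (n / d) : ℤ) : ℝ)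
      = ((n : ℝ) - (n / n.minFac : ℕ)) * q ^ (n / n.minFac)
        + ∑ d ∈ n.properDivisors.erase (n / n.minFac),
            ((d : ℝ) - n) * q ^ d * ((moebius (n / d) : ℤ) : ℝ) := by
  have hp := Nat.minFac_prime (by omega : n ≠ 1)
  have hnm : n / (n / n.minFac) = n.minFac := Nat.div_div_self (Nat.minFac_dvd n) (by omega)
  rw [← Nat.cons_self_properDivisors (by omega), sum_cons,
    ← add_sum_erase _ _ (Nat.div_minFac_mem_properDivisors hn), hnm, moebius_apply_prime hp]
  push_cast
  ring

theorem neg_le_sum_properDivisors_erase_div_minFac {n : ℕ} (hn : 2 ≤ n) {q : ℝ} (hq : 1 < q) :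
    -(n * ((q ^ (n / n.minFac) - q) / (q - 1))) ≤ ∑ d ∈ n.properDivisors.erase (n / n.minFac),
      ((d : ℝ) - n) * q ^ d * ((moebius (n / d) : ℤ) : ℝ) := by
  have hm : 1 ≤ n / n.minFac := Nat.pos_of_mem_properDivisors (Nat.div_minFac_mem_properDivisors hn)
  calc -(n * ((q ^ (n / n.minFac) - q) / (q - 1)))
      ≤ -(n * ∑ d ∈ n.properDivisors.erase (n / n.minFac), q ^ d) := by
        gcongr
        exact sum_pow_le_of_subset_Ico hq hm (Nat.properDivisors_erase_div_minFac_subset_Ico n)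
    _ = ∑ d ∈ n.properDivisors.erase (n / n.minFac), -(n * q ^ d) := by
        rw [mul_sum, sum_neg_distrib]
    _ ≤ _ := sum_le_sum fun d hd ↦ neg_mul_pow_le_sub_mul_pow_mul
        (Nat.mem_properDivisors.mp (mem_of_mem_erase hd)).2.le (by linarith)
        (by exact_mod_cast abs_moebius_le_one)

theorem stmt_4 (n : ℕ) (hn : 2 ≤ n) (q : ℝ) (hq : 3 ≤ q) :
    (n : ℝ) / (q - 1) + n ≤
        ∑ d ∈ n.divisors, ((d : ℝ) - n) * q ^ d * ((ArithmeticFunction.moebius (n / d) : ℤ) : ℝ) ∧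
      0 < ∑ d ∈ n.divisors,
        ((d : ℝ) - n) * q ^ d * ((ArithmeticFunction.moebius (n / d) : ℤ) : ℝ) := by
  have hbound : (n : ℝ) / (q - 1) + n ≤ ∑ d ∈ n.divisors,
      ((d : ℝ) - n) * q ^ d * ((moebius (n / d) : ℤ) : ℝ) := by
    rw [sum_divisors_sub_mul_pow_mul_moebius_eq n hn q]
    linarith [div_sub_one_add_le_of_two_mul_le (Nat.two_mul_div_minFac_le (by omega : n ≠ 1)) hq,
      neg_le_sum_properDivisors_erase_div_minFac hn (by linarith : 1 < q)]
  refine ⟨hbound, lt_of_lt_of_le ?_ hbound⟩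
  have : (0 : ℝ) < n := by exact_mod_cast (by omega : 0 < n)
  have : (0 : ℝ) < q - 1 := by linarith
  positivity
end

section
/- For all prime powers q ≥ 2 and N ≥ 1, S_{N,q} + ζ(2) − ∑_{n=1}^N 1/n² − 5q^{−N/2}/N² ≤ F(I_q) ≤ S_{N,q} + ζ(2) − ∑_{n=1}^N 1/n², where S_{N,q} = ∑_{n=1}^N π'_q(n)/(n·q^n). -/
open Polynomial Finset

section Aux
variable {F : Type*} [Field F] [Fintype F]

open scoped Classical in
noncomputable def polyFin (F : Type*) [Field F] [Fintype F] (d : ℕ) : Finset F[X] :=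
  Finset.image (fun v : Fin (d + 1) → F => ∑ i : Fin (d + 1), C (v i) * X ^ (i : ℕ)) Finset.univ

lemma mem_polyFin {d : ℕ} {f : F[X]} (h : f.natDegree ≤ d) : f ∈ polyFin F d := by
  classical
  rw [polyFin, Finset.mem_image]
  refine ⟨fun i => f.coeff i, Finset.mem_univ _, ?_⟩
  have := (f.as_sum_range' (d + 1) (Nat.lt_succ_of_le h)).symm
  rw [Fin.sum_univ_eq_sum_range (fun i => C (f.coeff i) * X ^ i) (d + 1)]
  simpa only [C_mul_X_pow_eq_monomial] using this

open scoped Classical in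
noncomputable def irredF (F : Type*) [Field F] [Fintype F] (d : ℕ) : Finset F[X] :=
  (polyFin F d).filter (fun f => f.Monic ∧ Irreducible f ∧ f.natDegree = d)

lemma mem_irredF {d : ℕ} {f : F[X]} :
    f ∈ irredF F d ↔ f.Monic ∧ Irreducible f ∧ f.natDegree = d := by
  classical
  rw [irredF, Finset.mem_filter]
  constructor
  · rintro ⟨-, h⟩; exact h
  · rintro h; exact ⟨mem_polyFin h.2.2.le, h⟩

lemma numIrred_eq (d : ℕ) : numIrred F d = (irredF F d).card := by
  rw [numIrred, show Nat.card {f : F[X] // f.Monic ∧ Irreducible f ∧ f.natDegree = d} = Set.ncard {f : F[X] | f.Monic ∧ Irreducible f ∧ f.natDegree = d} from Nat.card_coe_set_eq _]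
  have : {f : F[X] | f.Monic ∧ Irreducible f ∧ f.natDegree = d} = ↑(irredF F d) := by
    ext f; simp [mem_irredF]
  rw [this, Set.ncard_coe_finset]

lemma geom_nat {q : ℕ} (hq : 2 ≤ q) (m : ℕ) : ∑ d ∈ Icc 1 m, q ^ d ≤ 2 * q ^ m := by
  induction m with
  | zero => simp
  | succ m ih =>
    rw [← Finset.Ico_add_one_right_eq_Icc, Finset.sum_Ico_succ_top (by omega), Finset.Ico_add_one_right_eq_Icc]
    have : 2 * q ^ m ≤ q ^ (m + 1) := by
      rw [pow_succ, mul_comm]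
      exact Nat.mul_le_mul_left _ hq
    calc ∑ d ∈ Icc 1 m, q ^ d + q ^ (m+1) ≤ 2 * q ^ m + q ^ (m+1) := by omega
      _ ≤ 2 * q ^ (m+1) := by omega

lemma dvd_of_pow_sub_one_dvd {q : ℕ} (hq : 2 ≤ q) {d : ℕ} (hd : 0 < d) :
    ∀ n, q ^ d - 1 ∣ q ^ n - 1 → d ∣ n := by
  intro n
  induction n using Nat.strong_induction_on with
  | _ n ih =>
    intro h
    rcases lt_or_ge n d with hlt | hge
    · rcases Nat.eq_zero_or_pos n with rfl | hn
      · exact dvd_zero d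
      · exfalso
        have h1 : 0 < q ^ n - 1 := by
          have : 2 ≤ q ^ n := le_trans hq (Nat.le_self_pow hn.ne' q)
          omega
        have h2 : q ^ n - 1 < q ^ d - 1 := by
          have := Nat.pow_lt_pow_right (by omega : 1 < q) hlt
          omega
        exact absurd (Nat.le_of_dvd h1 h) (by omega)
    · have hpow : q ^ (n - d) * q ^ d = q ^ n := by
        rw [← pow_add]; congr 1; omega
      have h3 : q ^ (n - d) * (q ^ d - 1) = q ^ n - q ^ (n - d) := by
        rw [Nat.mul_sub, mul_one, hpow]
      have h4 : q ^ d - 1 ∣ q ^ (n - d) - 1 := by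
        have h5 : q ^ (n - d) - 1 = (q ^ n - 1) - q ^ (n - d) * (q ^ d - 1) := by
          have e1 : q ^ (n - d) ≤ q ^ n := Nat.pow_le_pow_right (by omega) (by omega)
          have e2 : 1 ≤ q ^ (n - d) := Nat.one_le_pow _ _ (by omega)
          omega
        rw [h5]
        exact Nat.dvd_sub h (Dvd.intro_left _ rfl)
      have := ih (n - d) (by omega) h4
      obtain ⟨k, hk⟩ := this
      exact ⟨k + 1, by rw [Nat.mul_succ]; omega⟩

end Aux

section Facts
open IntermediateField
variable {F : Type*} [Field F] [Fintype F] {E : Type*} [Field E] [Algebra F E]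

lemma pow_stab {M : Type*} [Monoid M] {x : M} {Q : ℕ} (h : x ^ Q = x) : ∀ k, x ^ Q ^ k = x
  | 0 => pow_one x
  | (k+1) => by rw [pow_succ, pow_mul, pow_stab h k, h]

lemma factB (α : E) (hint : IsIntegral F α) :
    α ^ (Fintype.card F) ^ (minpoly F α).natDegree = α := by
  haveI := IntermediateField.adjoin.finiteDimensional hint
  haveI : Finite F⟮α⟯ := Module.finite_of_finite F
  haveI : Fintype F⟮α⟯ := Fintype.ofFinite _
  have hcard : Fintype.card F⟮α⟯ = Fintype.card F ^ (minpoly F α).natDegree := by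
    rw [Module.card_eq_pow_finrank (K := F) (V := F⟮α⟯), IntermediateField.adjoin.finrank hint]
  have h := FiniteField.pow_card (IntermediateField.AdjoinSimple.gen F α)
  rw [hcard] at h
  have h2 := congrArg (algebraMap F⟮α⟯ E) h
  rwa [map_pow, IntermediateField.AdjoinSimple.algebraMap_gen] at h2

lemma factA (α : E) (hint : IsIntegral F α) {n : ℕ} (hn : 0 < n)
    (hα : α ^ (Fintype.card F) ^ n = α) : (minpoly F α).natDegree ∣ n := by
  classical
  have hq1 : 1 < Fintype.card F := Fintype.one_lt_card
  set q := Fintype.card F with hqdef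
  set d := (minpoly F α).natDegree with hddef
  have hd0 : 0 < d := minpoly.natDegree_pos hint
  haveI := IntermediateField.adjoin.finiteDimensional hint
  haveI : Finite F⟮α⟯ := Module.finite_of_finite F
  haveI : Fintype F⟮α⟯ := Fintype.ofFinite _
  have hcard : Fintype.card F⟮α⟯ = q ^ d := by
    rw [Module.card_eq_pow_finrank (K := F) (V := F⟮α⟯), IntermediateField.adjoin.finrank hint]
  haveI : CharP F⟮α⟯ (ringChar F) :=
    charP_of_injective_algebraMap (algebraMap F F⟮α⟯).injective _
  obtain ⟨m, hp, hqpm⟩ := FiniteField.card F (ringChar F)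
  haveI : Fact (ringChar F).Prime := ⟨hp⟩
  have hqn0 : q ^ n ≠ 0 := by positivity
  let ψ : F⟮α⟯ →ₐ[F] F⟮α⟯ :=
  { toFun := fun x => x ^ q ^ n
    map_one' := one_pow _
    map_mul' := fun x y => mul_pow x y _
    map_zero' := zero_pow hqn0
    map_add' := fun x y => by
      have hqe : q ^ n = (ringChar F) ^ ((m : ℕ) * n) := by rw [hqdef, hqpm, ← pow_mul]
      rw [hqe]
      exact add_pow_char_pow x y _ _
    commutes' := fun c => by
      rw [← map_pow]
      congr 1
      exact FiniteField.pow_card_pow n c }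
  have hψgen : ψ (IntermediateField.AdjoinSimple.gen F α) =
      IntermediateField.AdjoinSimple.gen F α := by
    apply Subtype.ext
    show ((IntermediateField.AdjoinSimple.gen F α ^ q ^ n : F⟮α⟯) : E) = _
    push_cast
    rw [IntermediateField.AdjoinSimple.coe_gen]
    exact hα
  have hψid : ψ = AlgHom.id F F⟮α⟯ := by
    apply (IntermediateField.adjoin.powerBasis hint).algHom_ext
    rw [IntermediateField.adjoin.powerBasis_gen]
    simpa using hψgen
  have hall : ∀ x : F⟮α⟯, x ^ q ^ n = x := fun x => by
    have := DFunLike.congr_fun hψid x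
    simpa [ψ] using this
  obtain ⟨g, hg⟩ := IsCyclic.exists_generator (α := (F⟮α⟯)ˣ)
  have horder : orderOf g = q ^ d - 1 := by
    rw [orderOf_eq_card_of_forall_mem_zpowers hg, Nat.card_eq_fintype_card,
      Fintype.card_units, hcard]
  have h3 : q ^ n - 1 + 1 = q ^ n := by
    have : 1 ≤ q ^ n := Nat.one_le_pow _ _ (by omega)
    omega
  have hg1 : g ^ (q ^ n - 1) = 1 := by
    have h2 : g ^ q ^ n = g := Units.ext (by rw [Units.val_pow_eq_pow_val]; exact hall g)
    have h4 : g ^ (q ^ n - 1) * g = 1 * g := by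
      rw [← pow_succ, h3, h2, one_mul]
    exact mul_right_cancel h4
  have hdvd1 : q ^ d - 1 ∣ q ^ n - 1 := horder ▸ orderOf_dvd_of_pow_eq_one hg1
  exact dvd_of_pow_sub_one_dvd hq1 hd0 n hdvd1

end Facts

section KeyId
variable (F : Type*) [Field F] [Fintype F]

theorem key_identity {n : ℕ} (hn : 0 < n) :
    ∑ d ∈ Nat.divisors n, d * (irredF F d).card = Fintype.card F ^ n := by
  classical
  have hq1 : 1 < Fintype.card F := Fintype.one_lt_card
  set q := Fintype.card F with hqdef
  set Omg := AlgebraicClosure F with hOmgdef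
  have hqn : 1 < q ^ n := Nat.one_lt_pow hn.ne' hq1
  set gp : Omg[X] := X ^ (q ^ n) - X with hgpdef
  have hgp0 : gp ≠ 0 := FiniteField.X_pow_card_sub_X_ne_zero Omg hqn
  have hgpdeg : gp.natDegree = q ^ n := FiniteField.X_pow_card_sub_X_natDegree_eq Omg hqn
  have hqOmg : ((q : ℕ) : Omg) = 0 := by
    rw [← map_natCast (algebraMap F Omg) q, FiniteField.cast_card_eq_zero, map_zero]
  have hsep : gp.Separable := by
    have hder : derivative gp = -1 := by
      rw [hgpdef, derivative_sub, derivative_X_pow, derivative_X, Nat.cast_pow, hqOmg,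
        zero_pow hn.ne', map_zero, zero_mul, zero_sub]
    rw [Polynomial.Separable, hder]
    exact ⟨0, -1, by ring⟩
  have hnodup : gp.roots.Nodup := nodup_roots hsep
  set S : Finset Omg := gp.roots.toFinset with hSdef
  have hScard : S.card = q ^ n := by
    rw [hSdef, Multiset.toFinset_card_of_nodup hnodup,
      splits_iff_card_roots.mp (IsAlgClosed.splits gp), hgpdeg]
  have hmemS : ∀ {α : Omg}, α ∈ S ↔ α ^ q ^ n = α := by
    intro α
    rw [hSdef, Multiset.mem_toFinset, mem_roots hgp0, IsRoot, hgpdef]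
    simp [sub_eq_zero]
  set I : Finset F[X] :=
    (polyFin F n).filter (fun f => f.Monic ∧ Irreducible f ∧ f.natDegree ∣ n) with hIdef
  set rootsOf : F[X] → Finset Omg := fun f => ((f.map (algebraMap F Omg)).roots).toFinset
    with hrootsdef
  have hmapne : ∀ f : F[X], f.Monic → f.map (algebraMap F Omg) ≠ 0 := fun f hf =>
    (hf.map (algebraMap F Omg)).ne_zero
  have hminp : ∀ f : F[X], f.Monic → Irreducible f → ∀ α ∈ rootsOf f, minpoly F α = f := by
    intro f hmo hirr α hα
    rw [hrootsdef, Multiset.mem_toFinset, mem_roots (hmapne f hmo), IsRoot] at hα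
    have haev : aeval α f = 0 := by rwa [aeval_def, ← eval_map]
    exact (minpoly.eq_of_irreducible_of_monic hirr haev hmo).symm
  have hcardroots : ∀ f : F[X], f.Monic → Irreducible f → (rootsOf f).card = f.natDegree := by
    intro f hmo hirr
    have hsepf : (f.map (algebraMap F Omg)).Separable :=
      (PerfectField.separable_of_irreducible hirr).map
    rw [hrootsdef]
    rw [Multiset.toFinset_card_of_nodup (nodup_roots hsepf),
      splits_iff_card_roots.mp (IsAlgClosed.splits (f.map (algebraMap F Omg))),
      natDegree_map]
  have hSeq : S = I.biUnion rootsOf := by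
    ext α
    rw [Finset.mem_biUnion]
    constructor
    · intro hα
      have hint : IsIntegral F α := Algebra.IsIntegral.isIntegral α
      have hdvd : (minpoly F α).natDegree ∣ n := factA α hint hn (hmemS.mp hα)
      refine ⟨minpoly F α, ?_, ?_⟩
      · rw [hIdef, Finset.mem_filter]
        exact ⟨mem_polyFin (Nat.le_of_dvd hn hdvd),
          minpoly.monic hint, minpoly.irreducible hint, hdvd⟩
      · rw [hrootsdef, Multiset.mem_toFinset,
          mem_roots (hmapne _ (minpoly.monic hint)), IsRoot, eval_map, ← aeval_def]
        exact minpoly.aeval F α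
    · rintro ⟨f, hfI, hα⟩
      rw [hIdef, Finset.mem_filter] at hfI
      obtain ⟨-, hmo, hirr, hdvd⟩ := hfI
      have hint : IsIntegral F α := Algebra.IsIntegral.isIntegral α
      have hmin : minpoly F α = f := hminp f hmo hirr α hα
      have hB : α ^ q ^ f.natDegree = α := by rw [← hmin]; exact factB α hint
      obtain ⟨k, hk⟩ := hdvd
      rw [hmemS, hk, pow_mul]
      exact pow_stab hB k
  have hdisj : ∀ f ∈ I, ∀ g ∈ I, f ≠ g → Disjoint (rootsOf f) (rootsOf g) := by
    intro f hf g hg hfg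
    rw [hIdef, Finset.mem_filter] at hf hg
    rw [Finset.disjoint_left]
    intro α hαf hαg
    exact hfg ((hminp f hf.2.1 hf.2.2.1 α hαf).symm.trans (hminp g hg.2.1 hg.2.2.1 α hαg))
  have hcount : q ^ n = ∑ f ∈ I, f.natDegree := by
    rw [← hScard, hSeq, Finset.card_biUnion hdisj]
    exact Finset.sum_congr rfl fun f hf => by
      rw [hIdef, Finset.mem_filter] at hf
      exact hcardroots f hf.2.1 hf.2.2.1
  rw [hcount]
  rw [← Finset.sum_fiberwise_of_maps_to (g := natDegree) (t := Nat.divisors n)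
    (fun f hf => by
      rw [hIdef, Finset.mem_filter] at hf
      exact Nat.mem_divisors.mpr ⟨hf.2.2.2, hn.ne'⟩) natDegree]
  refine Finset.sum_congr rfl fun d hd => ?_
  rw [Nat.mem_divisors] at hd
  have hfil : I.filter (fun f => f.natDegree = d) = irredF F d := by
    ext f
    rw [Finset.mem_filter, hIdef, Finset.mem_filter, mem_irredF]
    constructor
    · rintro ⟨⟨-, hmo, hirr, -⟩, hdeg⟩
      exact ⟨hmo, hirr, hdeg⟩
    · rintro ⟨hmo, hirr, hdeg⟩
      exact ⟨⟨mem_polyFin (hdeg.le.trans (Nat.le_of_dvd hn hd.1)),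
        hmo, hirr, hdeg ▸ hd.1⟩, hdeg⟩
  rw [Finset.sum_congr rfl (fun f hf => (Finset.mem_filter.mp hf).2),
    Finset.sum_const, smul_eq_mul, hfil, mul_comm]

end KeyId

section Bounds
variable (F : Type*) [Field F] [Fintype F]

theorem upper_bound {n : ℕ} (hn : 0 < n) : n * numIrred F n ≤ Fintype.card F ^ n := by
  rw [numIrred_eq, ← key_identity F hn]
  exact Finset.single_le_sum (f := fun d => d * (irredF F d).card) (fun d _ => Nat.zero_le _)
    (Nat.mem_divisors_self n hn.ne')

theorem lower_bound {n : ℕ} (hn : 0 < n) :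
    Fintype.card F ^ n ≤ n * numIrred F n + 2 * Fintype.card F ^ (n / 2) := by
  classical
  have hq2 : 2 ≤ Fintype.card F := Fintype.one_lt_card
  rw [numIrred_eq, ← key_identity F hn,
    ← Finset.add_sum_erase _ _ (Nat.mem_divisors_self n hn.ne')]
  have h1 : ∑ d ∈ (Nat.divisors n).erase n, d * (irredF F d).card ≤
      ∑ d ∈ Icc 1 (n / 2), Fintype.card F ^ d := by
    calc ∑ d ∈ (Nat.divisors n).erase n, d * (irredF F d).card
        ≤ ∑ d ∈ (Nat.divisors n).erase n, Fintype.card F ^ d := by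
          refine Finset.sum_le_sum fun d hd => ?_
          have hd' := Finset.mem_of_mem_erase hd
          rw [Nat.mem_divisors] at hd'
          have hd0 : 0 < d := Nat.pos_of_dvd_of_pos hd'.1 hn
          rw [← numIrred_eq]
          exact upper_bound F hd0
      _ ≤ ∑ d ∈ Icc 1 (n / 2), Fintype.card F ^ d := by
          refine Finset.sum_le_sum_of_subset fun d hd => ?_
          have hdn := Finset.ne_of_mem_erase hd
          have hd' := Finset.mem_of_mem_erase hd
          rw [Nat.mem_divisors] at hd'
          obtain ⟨c, hc⟩ := hd'.1
          have hd0 : 0 < d := Nat.pos_of_dvd_of_pos hd'.1 hn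
          have hc2 : 2 ≤ c := by
            rcases Nat.lt_or_ge c 2 with h | h
            · interval_cases c
              · omega
              · exfalso; exact hdn (by omega)
            · exact h
          rw [Finset.mem_Icc]
          refine ⟨hd0, (Nat.le_div_iff_mul_le two_pos).mpr ?_⟩
          calc d * 2 ≤ d * c := Nat.mul_le_mul_left d hc2
            _ = n := hc.symm
  have h2 := geom_nat hq2 (n / 2)
  omega

end Bounds

theorem stmt_5 (q N : ℕ) (hq : IsPrimePow q) (hq2 : 2 ≤ q) (hN : 1 ≤ N)
    (F : Type*) [Field F] [Fintype F] (hF : Fintype.card F = q) :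
    (∑ n ∈ Icc 1 N, (numIrred F n : ℝ) / (n * (q : ℝ) ^ n)) + Real.pi ^ 2 / 6 -
        (∑ n ∈ Icc 1 N, (1 : ℝ) / n ^ 2) - 5 * (q : ℝ) ^ (-(N : ℝ) / 2) / N ^ 2 ≤
      (∑' n : ℕ, (numIrred F (n + 1) : ℝ) / ((n + 1) * (q : ℝ) ^ (n + 1))) ∧
    (∑' n : ℕ, (numIrred F (n + 1) : ℝ) / ((n + 1) * (q : ℝ) ^ (n + 1))) ≤
      (∑ n ∈ Icc 1 N, (numIrred F n : ℝ) / (n * (q : ℝ) ^ n)) + Real.pi ^ 2 / 6 -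
        ∑ n ∈ Icc 1 N, (1 : ℝ) / n ^ 2 := by
  have hq0 : (0:ℝ) < q := by positivity
  have hq1 : (1:ℝ) ≤ q := by exact_mod_cast hq2.trans' one_le_two
  have hq2' : (2:ℝ) ≤ q := by exact_mod_cast hq2
  -- real-valued upper bound
  have hub : ∀ n : ℕ, 0 < n → (numIrred F n : ℝ) / (n * (q:ℝ) ^ n) ≤ 1 / (n:ℝ) ^ 2 := by
    intro n hn
    have h := upper_bound F hn
    rw [hF] at h
    have hc : (n:ℝ) * (numIrred F n : ℝ) ≤ (q:ℝ) ^ n := by exact_mod_cast h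
    have hn1 : (1:ℝ) ≤ (n:ℝ) := by exact_mod_cast hn
    rw [div_le_div_iff₀ (by positivity) (by positivity)]
    nlinarith [mul_le_mul_of_nonneg_left hc (by positivity : (0:ℝ) ≤ (n:ℝ))]
  -- real-valued lower bound
  have hlb : ∀ n : ℕ, 0 < n →
      1 / (n:ℝ) ^ 2 - (numIrred F n : ℝ) / (n * (q:ℝ) ^ n) ≤
        2 * (q:ℝ) ^ (-(n:ℝ) / 2) / (n:ℝ) ^ 2 := by
    intro n hn
    have h := lower_bound F hn
    rw [hF] at h
    have hc : (q:ℝ) ^ n ≤ (n:ℝ) * (numIrred F n : ℝ) + 2 * (q:ℝ) ^ (n / 2 : ℕ) := by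
      exact_mod_cast h
    have hhalf : (q:ℝ) ^ (n / 2 : ℕ) ≤ (q:ℝ) ^ ((n:ℝ) / 2) := by
      rw [← Real.rpow_natCast (q:ℝ) (n / 2)]
      apply Real.rpow_le_rpow_of_exponent_le hq1
      have : (n / 2 : ℕ) * 2 ≤ n := Nat.div_mul_le_self n 2
      have : ((n / 2 : ℕ) : ℝ) * 2 ≤ (n:ℝ) := by exact_mod_cast this
      linarith
    have hrw : (q:ℝ) ^ (-(n:ℝ) / 2) * (q:ℝ) ^ n = (q:ℝ) ^ ((n:ℝ) / 2) := by
      rw [← Real.rpow_natCast (q:ℝ) n, ← Real.rpow_add hq0]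
      ring_nf
    have key : (q:ℝ) ^ n - (n:ℝ) * (numIrred F n : ℝ) ≤
        2 * (q:ℝ) ^ (-(n:ℝ) / 2) * (q:ℝ) ^ n := by
      calc (q:ℝ) ^ n - (n:ℝ) * (numIrred F n : ℝ) ≤ 2 * (q:ℝ) ^ (n / 2 : ℕ) := by linarith
        _ ≤ 2 * (q:ℝ) ^ ((n:ℝ) / 2) := by linarith
        _ = 2 * (q:ℝ) ^ (-(n:ℝ) / 2) * (q:ℝ) ^ n := by rw [mul_assoc, hrw]
    have hn0 : (0:ℝ) < (n:ℝ) := by exact_mod_cast hn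
    have e1 : 1 / (n:ℝ) ^ 2 - (numIrred F n : ℝ) / (n * (q:ℝ) ^ n) =
        ((q:ℝ) ^ n - (n:ℝ) * (numIrred F n : ℝ)) / ((n:ℝ) ^ 2 * (q:ℝ) ^ n) := by
      field_simp
    have e2 : 2 * (q:ℝ) ^ (-(n:ℝ) / 2) / (n:ℝ) ^ 2 =
        (2 * (q:ℝ) ^ (-(n:ℝ) / 2) * (q:ℝ) ^ n) / ((n:ℝ) ^ 2 * (q:ℝ) ^ n) := by
      rw [eq_div_iff (by positivity : ((n:ℝ) ^ 2 * (q:ℝ) ^ n) ≠ 0)]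
      field_simp
    rw [e1, e2]
    gcongr
  -- summability setup
  set b : ℕ → ℝ := fun n => (numIrred F (n + 1) : ℝ) / ((n + 1) * (q : ℝ) ^ (n + 1)) with hbdef
  set c : ℕ → ℝ := fun n => (1:ℝ) / (n:ℝ) ^ 2 with hcdef
  have hcast : ∀ i : ℕ, ((i:ℝ) + 1) = ((i + 1 : ℕ) : ℝ) := fun i => by push_cast; ring
  have hb_eq : ∀ i : ℕ, b i = (numIrred F (i + 1) : ℝ) / (((i + 1 : ℕ) : ℝ) * (q:ℝ) ^ (i + 1)) := by
    intro i; rw [hbdef]; push_cast; ring_nf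
  have hb0 : ∀ i, 0 ≤ b i := fun i => by rw [hb_eq]; positivity
  have hble : ∀ i : ℕ, b i ≤ c (i + 1) := by
    intro i
    rw [hb_eq, hcdef]
    exact hub (i + 1) (Nat.succ_pos i)
  have hzsum : Summable c := hasSum_zeta_two.summable
  have hcs : Summable (fun i => c (i + 1)) := (summable_nat_add_iff 1).mpr hzsum
  have hSb : Summable b := Summable.of_nonneg_of_le hb0 hble hcs
  -- decomposition of the two partial sums
  have hA : ∑ n ∈ Icc 1 N, (numIrred F n : ℝ) / (n * (q : ℝ) ^ n) =
      ∑ i ∈ Finset.range N, b i := by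
    rw [← Finset.Ico_add_one_right_eq_Icc, Finset.sum_Ico_eq_sum_range]
    simp only [Nat.add_sub_cancel, Nat.succ_sub_one]
    refine Finset.sum_congr rfl fun i _ => ?_
    rw [hb_eq, add_comm 1 i]
  have hZ : ∑ n ∈ Icc 1 N, (1:ℝ) / (n:ℝ) ^ 2 = ∑ i ∈ Finset.range N, c (i + 1) := by
    rw [← Finset.Ico_add_one_right_eq_Icc, Finset.sum_Ico_eq_sum_range]
    simp only [Nat.add_sub_cancel, Nat.succ_sub_one]
    exact Finset.sum_congr rfl fun i _ => by rw [hcdef, add_comm 1 i]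
  have hzeta : Real.pi ^ 2 / 6 - ∑ n ∈ Icc 1 N, (1:ℝ) / (n:ℝ) ^ 2 =
      ∑' i, c (i + (N + 1)) := by
    have h1 := Summable.sum_add_tsum_nat_add (N + 1) hzsum
    rw [hasSum_zeta_two.tsum_eq] at h1
    have h2 : ∑ i ∈ Finset.range (N + 1), c i = ∑ n ∈ Icc 1 N, (1:ℝ) / (n:ℝ) ^ 2 := by
      rw [Finset.sum_range_succ' c N, hZ]
      have : c 0 = 0 := by rw [hcdef]; norm_num
      rw [this, add_zero]
    linarith [h1, h2.symm]
  have hsplitb := Summable.sum_add_tsum_nat_add N hSb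
  have hRsum : Summable (fun i => b (i + N)) := (summable_nat_add_iff N).mpr hSb
  have hTsum : Summable (fun i => c (i + (N + 1))) := (summable_nat_add_iff (N + 1)).mpr hzsum
  have hterm_le : ∀ i : ℕ, b (i + N) ≤ c (i + (N + 1)) := by
    intro i
    have := hble (i + N)
    have hidx : i + N + 1 = i + (N + 1) := by omega
    rwa [hidx] at this
  constructor
  · -- lower bound
    set r : ℝ := (2:ℝ) ^ (-(1:ℝ) / 2) with hrdef
    have hr0 : 0 ≤ r := by rw [hrdef]; positivity
    have hr1 : r < 1 := by
      rw [hrdef]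
      exact Real.rpow_lt_one_of_one_lt_of_neg one_lt_two (by norm_num)
    have hr2 : r ^ 2 = 1 / 2 := by
      rw [hrdef, ← Real.rpow_natCast ((2:ℝ) ^ (-(1:ℝ)/2)) 2, ← Real.rpow_mul (by norm_num)]
      norm_num
    have hr57 : r ≤ 5 / 7 := by nlinarith
    set Q : ℝ := (q:ℝ) ^ (-(N:ℝ) / 2) with hQdef
    have hQ0 : 0 ≤ Q := by rw [hQdef]; positivity
    set D : ℝ := 2 * Q / (N:ℝ) ^ 2 with hDdef
    have hN0 : (0:ℝ) < (N:ℝ) := by exact_mod_cast hN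
    have hD0 : 0 ≤ D := by rw [hDdef]; positivity
    -- termwise tail bound
    have htail : ∀ i : ℕ, c (i + (N + 1)) - b (i + N) ≤ D * r ^ (i + 1) := by
      intro i
      set n : ℕ := i + N + 1 with hndef
      have hn : 0 < n := by omega
      have h1 := hlb n hn
      have hidx : i + (N + 1) = n := by omega
      have h2 : c (i + (N + 1)) - b (i + N) ≤ 2 * (q:ℝ) ^ (-(n:ℝ) / 2) / (n:ℝ) ^ 2 := by
        rw [hidx, hcdef]
        have : b (i + N) = (numIrred F n : ℝ) / ((n:ℝ) * (q:ℝ) ^ n) := by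
          rw [hb_eq]
        rw [this]
        exact h1
    -- now bound  2 q^{-n/2}/n²  ≤  D r^{i+1}
      refine h2.trans ?_
      have hsplit : (q:ℝ) ^ (-(n:ℝ) / 2) = Q * (q:ℝ) ^ (-((i:ℝ) + 1) / 2) := by
        rw [hQdef, ← Real.rpow_add hq0]
        congr 1
        have : ((n:ℕ):ℝ) = (i:ℝ) + (N:ℝ) + 1 := by rw [hndef]; push_cast; ring
        rw [this]; ring
      have hbase : (q:ℝ) ^ (-((i:ℝ) + 1) / 2) ≤ r ^ (i + 1) := by
        have e3 : r ^ (i + 1) = (2:ℝ) ^ (-((i:ℝ) + 1) / 2) := by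
          rw [hrdef, ← Real.rpow_natCast ((2:ℝ) ^ (-(1:ℝ)/2)) (i+1),
            ← Real.rpow_mul (by norm_num)]
          congr 1
          push_cast; ring
        rw [e3]
        have hx : (0:ℝ) ≤ ((i:ℝ) + 1) / 2 := by positivity
        rw [show (-((i:ℝ) + 1) / 2) = -(((i:ℝ) + 1) / 2) by ring,
          Real.rpow_neg hq0.le, Real.rpow_neg (by norm_num : (0:ℝ) ≤ 2)]
        apply inv_anti₀
        · positivity
        · exact Real.rpow_le_rpow (by norm_num) hq2' hx
      have hnN : (N:ℝ) ≤ (n:ℝ) := by exact_mod_cast (by omega : N ≤ n)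
      rw [hDdef, hsplit, div_mul_eq_mul_div]
      rw [div_le_div_iff₀ (by positivity) (by positivity)]
      have hq' : (0:ℝ) ≤ (q:ℝ) ^ (-((i:ℝ) + 1) / 2) := by positivity
      calc 2 * (Q * (q:ℝ) ^ (-((i:ℝ) + 1) / 2)) * (N:ℝ) ^ 2
          ≤ 2 * (Q * r ^ (i + 1)) * (n:ℝ) ^ 2 := by
            apply mul_le_mul
            · apply mul_le_mul_of_nonneg_left _ (by norm_num : (0:ℝ) ≤ 2)
              exact mul_le_mul_of_nonneg_left hbase hQ0
            · nlinarith
            · positivity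
            · positivity
        _ = 2 * Q * r ^ (i + 1) * (n:ℝ) ^ 2 := by ring
    -- sum the geometric bound
    have hgsum : Summable (fun i : ℕ => D * r ^ (i + 1)) := by
      have : (fun i : ℕ => D * r ^ (i + 1)) = fun i : ℕ => (D * r) * r ^ i := by
        funext i; ring
      rw [this]
      exact (summable_geometric_of_lt_one hr0 hr1).mul_left _
    have hdiffsum : Summable (fun i => c (i + (N + 1)) - b (i + N)) := hTsum.sub hRsum
    have hTR : ∑' i, c (i + (N + 1)) - ∑' i, b (i + N) ≤ ∑' i, D * r ^ (i + 1) := by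
      rw [← Summable.tsum_sub hTsum hRsum]
      exact Summable.tsum_le_tsum htail hdiffsum hgsum
    have hgeval : ∑' i : ℕ, D * r ^ (i + 1) = D * r * (1 - r)⁻¹ := by
      have e : (fun i : ℕ => D * r ^ (i + 1)) = fun i : ℕ => (D * r) * r ^ i := by
        funext i; ring
      rw [e, tsum_mul_left, tsum_geometric_of_lt_one hr0 hr1]
    have hfinal : D * r * (1 - r)⁻¹ ≤ 5 * Q / (N:ℝ) ^ 2 := by
      have h1r : (0:ℝ) < 1 - r := by linarith
      have hx : r * (1 - r)⁻¹ ≤ 5 / 2 := by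
        rw [← div_eq_mul_inv, div_le_div_iff₀ h1r (by norm_num)]
        linarith
      have hQN : (0:ℝ) ≤ Q / (N:ℝ) ^ 2 := by positivity
      rw [hDdef]
      calc 2 * Q / (N:ℝ) ^ 2 * r * (1 - r)⁻¹ = 2 * (r * (1 - r)⁻¹) * (Q / (N:ℝ) ^ 2) := by
            ring
        _ ≤ 2 * (5 / 2) * (Q / (N:ℝ) ^ 2) := by
            apply mul_le_mul_of_nonneg_right _ hQN
            linarith
        _ = 5 * Q / (N:ℝ) ^ 2 := by ring
    have hRT : ∑' i, c (i + (N + 1)) - ∑' i, b (i + N) ≤ 5 * Q / (N:ℝ) ^ 2 := by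
      calc ∑' i, c (i + (N + 1)) - ∑' i, b (i + N) ≤ ∑' i, D * r ^ (i + 1) := hTR
        _ = D * r * (1 - r)⁻¹ := hgeval
        _ ≤ 5 * Q / (N:ℝ) ^ 2 := hfinal
    rw [hA]
    linarith [hsplitb, hzeta, hRT]
  · -- upper bound
    have hRT : ∑' i, b (i + N) ≤ ∑' i, c (i + (N + 1)) := Summable.tsum_le_tsum hterm_le hRsum hTsum
    rw [hA]
    linarith [hsplitb, hzeta, hRT]
end

section
/- For any prime power q and positive integer n, (1 − 1/(2(q−1)q^{⌊n/2⌋}))·∑_{i=1}^n 1/i ≤ |∑_{i=1}^n π'_q(i)·log(1 − 1/q^i)| ≤ (1 + 1/(2(q−1)q^{⌊n/2⌋}))·∑_{i=1}^n 1/i. -/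
/-!
Since `X ^ q ^ m - X` is the squarefree product of the monic irreducibles of degree dividing `m`,
comparing degrees gives Gauss' relation `∑_{d ∣ m} d π'_q(d) = q ^ m`. Expanding
`-log (1 - q⁻ⁱ) = ∑ₖ q⁻ⁱᵏ / k` and keeping only the terms with `i k ≤ n`, the relation collapses
the truncated double sum `∑_{i ≤ n} π'_q(i) ∑_{k ≤ n / i} q⁻ⁱᵏ / k` to exactly `∑_{m ≤ n} 1 / m`.
What is left over is nonnegative, and since `i π'_q(i) ≤ qⁱ` and `i ⌊n / i⌋ > n / 2`, the
discarded tail of the `i`-th series contributes at most `1 / (2 (q - 1) q^⌊n/2⌋ i)`.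
-/

open Polynomial Finset

open UniqueFactorizationMonoid

namespace Polynomial

theorem sum_natDegree_normalizedFactors {K : Type*} [Field K] [DecidableEq K] {p : K[X]}
    (hp : p ≠ 0) : ((normalizedFactors p).map natDegree).sum = p.natDegree := by
  rw [← natDegree_multiset_prod _ (zero_notMem_normalizedFactors _)]
  exact natDegree_eq_of_degree_eq (degree_eq_degree_of_associated (prod_normalizedFactors hp))

variable {F : Type*} [Field F] [Fintype F] [DecidableEq F] {m : ℕ}

theorem mem_normalizedFactors_X_pow_card_pow_sub_X (hm : m ≠ 0) {g : F[X]} :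
    g ∈ normalizedFactors (X ^ Fintype.card F ^ m - X : F[X]) ↔
      Irreducible g ∧ g.Monic ∧ g.natDegree ∣ m := by
  rw [Polynomial.mem_normalizedFactors_iff
    (FiniteField.X_pow_card_pow_sub_X_ne_zero F hm Fintype.one_lt_card)]
  refine and_congr_right fun hg ↦ and_congr_right fun _ ↦ ?_
  rw [hg.natDegree_dvd_iff_dvd_X_pow_card_pow_sub_X, Nat.card_eq_fintype_card]

theorem nodup_normalizedFactors_X_pow_card_pow_sub_X (hm : m ≠ 0) :
    (normalizedFactors (X ^ Fintype.card F ^ m - X : F[X])).Nodup := by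
  have hsep : (X ^ Fintype.card F ^ m - X : F[X]).Separable :=
    galois_poly_separable (ringChar F) _ <| dvd_pow
      ((CharP.cast_eq_zero_iff F _ _).1 (FiniteField.cast_card_eq_zero F)) hm
  exact (squarefree_iff_nodup_normalizedFactors
    (FiniteField.X_pow_card_pow_sub_X_ne_zero F hm Fintype.one_lt_card)).1 hsep.squarefree

end Polynomial

section Gauss

variable (F : Type*) [Field F] [Fintype F]

theorem numIrred_eq_card_filter_normalizedFactors [DecidableEq F] {m d : ℕ} (hm : m ≠ 0)
    (hd : d ∣ m) :
    numIrred F d = #{g ∈ (normalizedFactors (X ^ Fintype.card F ^ m - X : F[X])).toFinset |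
      g.natDegree = d} :=
  Nat.subtype_card _ fun g ↦ by
    simp only [mem_filter, Multiset.mem_toFinset, mem_normalizedFactors_X_pow_card_pow_sub_X hm]
    constructor
    · rintro ⟨⟨hirr, hmo, -⟩, rfl⟩
      exact ⟨hmo, hirr, rfl⟩
    · rintro ⟨hmo, hirr, rfl⟩
      exact ⟨⟨hirr, hmo, hd⟩, rfl⟩

theorem sum_divisors_mul_numIrred {m : ℕ} (hm : m ≠ 0) :
    ∑ d ∈ m.divisors, d * numIrred F d = Fintype.card F ^ m := by
  classical
  have hP : (X ^ Fintype.card F ^ m - X : F[X]) ≠ 0 :=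
    FiniteField.X_pow_card_pow_sub_X_ne_zero F hm Fintype.one_lt_card
  have hdeg : ∑ g ∈ (normalizedFactors (X ^ Fintype.card F ^ m - X : F[X])).toFinset,
      g.natDegree = Fintype.card F ^ m := by
    rw [sum_eq_multiset_sum, Multiset.toFinset_val,
      (nodup_normalizedFactors_X_pow_card_pow_sub_X hm).dedup, sum_natDegree_normalizedFactors hP,
      FiniteField.X_pow_card_pow_sub_X_natDegree_eq F hm Fintype.one_lt_card]
  rw [← hdeg, ← sum_fiberwise_of_maps_to (g := natDegree) (t := m.divisors)]
  · refine sum_congr rfl fun d hd ↦ ?_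
    rw [sum_congr rfl fun g hg ↦ (mem_filter.1 hg).2, sum_const, smul_eq_mul, mul_comm,
      numIrred_eq_card_filter_normalizedFactors F hm (Nat.dvd_of_mem_divisors hd)]
  · intro g hg
    rw [Multiset.mem_toFinset, mem_normalizedFactors_X_pow_card_pow_sub_X hm] at hg
    exact Nat.mem_divisors.2 ⟨hg.2.2, hm⟩

theorem mul_numIrred_le (d : ℕ) : d * numIrred F d ≤ Fintype.card F ^ d := by
  rcases eq_or_ne d 0 with rfl | hd
  · simp
  rw [← sum_divisors_mul_numIrred F hd]
  exact single_le_sum (f := fun i ↦ i * numIrred F i) (fun _ _ ↦ Nat.zero_le _)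
    (Nat.mem_divisors_self d hd)

end Gauss

theorem Nat.sum_Icc_sum_divisorsAntidiagonal {M : Type*} [AddCommMonoid M] (f : ℕ → ℕ → M)
    (N : ℕ) :
    ∑ m ∈ Icc 1 N, ∑ x ∈ m.divisorsAntidiagonal, f x.1 x.2 =
      ∑ a ∈ Icc 1 N, ∑ b ∈ Icc 1 (N / a), f a b := by
  rw [sum_sigma', sum_sigma']
  refine sum_nbij' (fun x ↦ ⟨x.2.1, x.2.2⟩) (fun x ↦ ⟨x.1 * x.2, (x.1, x.2)⟩) ?_ ?_ ?_ ?_ ?_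
  · rintro ⟨m, a, b⟩ h
    simp only [mem_sigma, mem_Icc, Nat.mem_divisorsAntidiagonal] at h ⊢
    obtain ⟨⟨-, hN⟩, rfl, hab⟩ := h
    have ha : 0 < a := Nat.pos_of_ne_zero (left_ne_zero_of_mul hab)
    have hb : 0 < b := Nat.pos_of_ne_zero (right_ne_zero_of_mul hab)
    exact ⟨⟨ha, (Nat.le_mul_of_pos_right a hb).trans hN⟩, hb,
      (Nat.le_div_iff_mul_le ha).2 (by rwa [mul_comm])⟩
  · rintro ⟨a, b⟩ h
    simp only [mem_sigma, mem_Icc, Nat.mem_divisorsAntidiagonal] at h ⊢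
    obtain ⟨⟨ha, -⟩, hb, hbN⟩ := h
    have hab : b * a ≤ N := (Nat.le_div_iff_mul_le ha).1 hbN
    exact ⟨⟨Nat.one_le_iff_ne_zero.2 (by positivity), by rwa [mul_comm]⟩, trivial, by positivity⟩
  · rintro ⟨m, a, b⟩ h
    simp only [mem_sigma, Nat.mem_divisorsAntidiagonal] at h
    rw [h.2.1]
  · exact fun _ _ ↦ rfl
  · exact fun _ _ ↦ rfl

theorem Nat.div_two_add_one_le_mul_div {n i : ℕ} (hi : 0 < i) (hin : i ≤ n) :
    n / 2 + 1 ≤ i * (n / i) := by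
  have hlt : n < i * (n / i) + i := by simpa [mul_add] using Nat.lt_mul_div_succ n hi
  have hle : i ≤ i * (n / i) := Nat.le_mul_of_pos_right i (Nat.div_pos hin hi)
  omega

theorem sum_mul_sum_Icc_pow_div_eq_sum_Icc_one_div {N : ℕ → ℝ} {q : ℝ} (hq : q ≠ 0) {n : ℕ}
    (hN : ∀ m ∈ Icc 1 n, ∑ d ∈ m.divisors, d * N d = q ^ m) :
    ∑ i ∈ Icc 1 n, N i * ∑ k ∈ Icc 1 (n / i), (1 / q ^ i) ^ k / k =
      ∑ m ∈ Icc 1 n, (1 : ℝ) / m := by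
  simp_rw [mul_sum]
  rw [← Nat.sum_Icc_sum_divisorsAntidiagonal (fun i k ↦ N i * ((1 / q ^ i) ^ k / k))]
  refine sum_congr rfl fun m hm ↦ ?_
  have hm0 : (m : ℝ) ≠ 0 := by have := (mem_Icc.1 hm).1; positivity
  calc ∑ x ∈ m.divisorsAntidiagonal, N x.1 * ((1 / q ^ x.1) ^ x.2 / x.2)
      = ∑ x ∈ m.divisorsAntidiagonal, x.1 * N x.1 / (m * q ^ m) := by
        refine sum_congr rfl fun x hx ↦ ?_
        obtain ⟨hmul, hm_ne⟩ := Nat.mem_divisorsAntidiagonal.1 hx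
        have hx1 : (x.1 : ℝ) ≠ 0 := by exact_mod_cast left_ne_zero_of_mul (hmul ▸ hm_ne)
        have hx2 : (x.2 : ℝ) ≠ 0 := by exact_mod_cast right_ne_zero_of_mul (hmul ▸ hm_ne)
        rw [← hmul, one_div_pow, ← pow_mul]
        push_cast
        field_simp
    _ = 1 / m := by
        rw [← sum_div, Nat.sum_divisorsAntidiagonal (fun a _ ↦ a * N a), hN m hm]
        field_simp

namespace Real

theorem hasSum_pow_div_neg_log_one_sub_sub_sum_Icc {x : ℝ} (hx : |x| < 1) (K : ℕ) :
    HasSum (fun k : ℕ ↦ x ^ (k + K + 1) / ((k + K : ℕ) + 1))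
      (-log (1 - x) - ∑ k ∈ Icc 1 K, x ^ k / k) := by
  have hpartial : ∑ k ∈ range K, x ^ (k + 1) / ((k : ℝ) + 1) = ∑ k ∈ Icc 1 K, x ^ k / k := by
    rw [← Ico_add_one_right_eq_Icc]
    simpa using sum_Ico_add' (fun k : ℕ ↦ x ^ k / (k : ℝ)) 0 K 1
  rw [← hpartial]
  exact (hasSum_nat_add_iff' K).2 (hasSum_pow_div_log_of_abs_lt_one hx)

theorem sum_Icc_pow_div_le_neg_log_one_sub {x : ℝ} (h0 : 0 ≤ x) (h1 : x < 1) (K : ℕ) :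
    ∑ k ∈ Icc 1 K, x ^ k / k ≤ -log (1 - x) :=
  sub_nonneg.1 <| (hasSum_pow_div_neg_log_one_sub_sub_sum_Icc (abs_lt.2 ⟨by linarith, h1⟩) K).nonneg
    fun _ ↦ by positivity

theorem neg_log_one_sub_sub_sum_Icc_le {x : ℝ} (h0 : 0 ≤ x) (h1 : x < 1) (K : ℕ) :
    -log (1 - x) - ∑ k ∈ Icc 1 K, x ^ k / k ≤ x ^ (K + 1) / ((K + 1) * (1 - x)) := by
  have hgeom := (hasSum_geometric_of_lt_one h0 h1).mul_left (x ^ (K + 1) / (K + 1))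
  rw [← div_eq_mul_inv, div_div] at hgeom
  refine hasSum_le (fun k ↦ ?_)
    (hasSum_pow_div_neg_log_one_sub_sub_sum_Icc (abs_lt.2 ⟨by linarith, h1⟩) K) hgeom
  rw [div_mul_eq_mul_div, ← pow_add, show K + 1 + k = k + K + 1 by ring]
  gcongr
  exact Nat.le_add_left K k

end Real

open Real in
theorem mul_neg_log_one_sub_sub_sum_Icc_le {q N : ℝ} (hq : 1 < q) {i n : ℕ} (hi : i ∈ Icc 1 n)
    (hN : i * N ≤ q ^ i) :
    N * (-log (1 - 1 / q ^ i) - ∑ k ∈ Icc 1 (n / i), (1 / q ^ i) ^ k / k) ≤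
      1 / (2 * (q - 1) * q ^ (n / 2)) * (1 / i) := by
  obtain ⟨hi1, hin⟩ := mem_Icc.1 hi
  set K := n / i
  have hK : 1 ≤ K := Nat.div_pos hin hi1
  have hqi : 1 < q ^ i := one_lt_pow₀ hq (by omega)
  have hi0 : (0 : ℝ) < i := by exact_mod_cast hi1
  have hx0 : 0 ≤ 1 / q ^ i := by positivity
  have hx1 : 1 / q ^ i < 1 := (div_lt_one (by positivity)).2 hqi
  calc N * (-log (1 - 1 / q ^ i) - ∑ k ∈ Icc 1 K, (1 / q ^ i) ^ k / k)
      ≤ q ^ i / i * ((1 / q ^ i) ^ (K + 1) / ((K + 1) * (1 - 1 / q ^ i))) := by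
        gcongr
        · exact sub_nonneg.2 (sum_Icc_pow_div_le_neg_log_one_sub hx0 hx1 K)
        · rw [le_div_iff₀ hi0]; linarith
        · exact neg_log_one_sub_sub_sum_Icc_le hx0 hx1 K
    _ = 1 / q ^ (i * K) / ((K + 1) * (1 - 1 / q ^ i)) * (1 / i) := by
        rw [one_div_pow, ← pow_mul, mul_add_one, pow_add]
        field_simp
    _ ≤ 1 / q ^ (n / 2 + 1) / (2 * (1 - 1 / q)) * (1 / i) := by
        have hK2 : (2 : ℝ) ≤ K + 1 := by norm_cast; omega
        have hq1 : 1 / q < 1 := (div_lt_one (by positivity)).2 hq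
        gcongr
        · linarith
        · exact Nat.div_two_add_one_le_mul_div hi1 hin
        · exact le_self_pow₀ hq.le (by omega)
    _ = 1 / (2 * (q - 1) * q ^ (n / 2)) * (1 / i) := by
        rw [pow_succ]
        field_simp

theorem stmt_6_general (q n : ℕ)
    (F : Type*) [Field F] [Fintype F] (hF : Fintype.card F = q) :
    (1 - 1 / (2 * ((q : ℝ) - 1) * (q : ℝ) ^ (n / 2))) * (∑ i ∈ Icc 1 n, (1 : ℝ) / i) ≤
        |∑ i ∈ Icc 1 n, (numIrred F i : ℝ) * Real.log (1 - 1 / (q : ℝ) ^ i)| ∧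
      |∑ i ∈ Icc 1 n, (numIrred F i : ℝ) * Real.log (1 - 1 / (q : ℝ) ^ i)| ≤
        (1 + 1 / (2 * ((q : ℝ) - 1) * (q : ℝ) ^ (n / 2))) * ∑ i ∈ Icc 1 n, (1 : ℝ) / i := by
  have hq : (1 : ℝ) < q := by rw [← hF]; exact_mod_cast Fintype.one_lt_card
  have hgauss : ∀ m ∈ Icc 1 n, ∑ d ∈ m.divisors, (d : ℝ) * numIrred F d = (q : ℝ) ^ m := by
    intro m hm
    rw [← hF]
    exact_mod_cast sum_divisors_mul_numIrred F (Nat.one_le_iff_ne_zero.1 (mem_Icc.1 hm).1)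
  set ε := 1 / (2 * ((q : ℝ) - 1) * (q : ℝ) ^ (n / 2))
  set H := ∑ i ∈ Icc 1 n, (1 : ℝ) / i with hH_def
  set T := ∑ i ∈ Icc 1 n, (numIrred F i : ℝ) *
    (-Real.log (1 - 1 / (q : ℝ) ^ i) - ∑ k ∈ Icc 1 (n / i), (1 / (q : ℝ) ^ i) ^ k / k)
  have hdecomp : -∑ i ∈ Icc 1 n, (numIrred F i : ℝ) * Real.log (1 - 1 / (q : ℝ) ^ i) = H + T := by
    rw [hH_def, ← sum_mul_sum_Icc_pow_div_eq_sum_Icc_one_div (by positivity) hgauss,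
      ← sum_neg_distrib, ← sum_add_distrib]
    exact sum_congr rfl fun i _ ↦ by ring
  have hH : 0 ≤ H := sum_nonneg fun i _ ↦ by positivity
  have hε : 0 ≤ ε := by have := sub_pos.2 hq; positivity
  have hT : 0 ≤ T := sum_nonneg fun i hi ↦ by
    have hqi : 1 < (q : ℝ) ^ i := one_lt_pow₀ hq (Nat.one_le_iff_ne_zero.1 (mem_Icc.1 hi).1)
    exact mul_nonneg (Nat.cast_nonneg _) <| sub_nonneg.2 <|
      Real.sum_Icc_pow_div_le_neg_log_one_sub (by positivity) ((div_lt_one (by positivity)).2 hqi) _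
  have hTε : T ≤ ε * H := by
    rw [mul_sum]
    exact sum_le_sum fun i hi ↦ mul_neg_log_one_sub_sub_sum_Icc_le hq hi
      (by exact_mod_cast hF ▸ mul_numIrred_le F i)
  rw [abs_of_nonpos (by linarith)]
  constructor <;> nlinarith

theorem stmt_6 (q n : ℕ) (hq : IsPrimePow q) (hn : 1 ≤ n)
    (F : Type*) [Field F] [Fintype F] (hF : Fintype.card F = q) :
    (1 - 1 / (2 * ((q : ℝ) - 1) * (q : ℝ) ^ (n / 2))) * (∑ i ∈ Icc 1 n, (1 : ℝ) / i) ≤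
        |∑ i ∈ Icc 1 n, (numIrred F i : ℝ) * Real.log (1 - 1 / (q : ℝ) ^ i)| ∧
      |∑ i ∈ Icc 1 n, (numIrred F i : ℝ) * Real.log (1 - 1 / (q : ℝ) ^ i)| ≤
        (1 + 1 / (2 * ((q : ℝ) - 1) * (q : ℝ) ^ (n / 2))) * ∑ i ∈ Icc 1 n, (1 : ℝ) / i :=
  stmt_6_general q n F hF
end

section
/- In the power series expansion (in 1/q) of −∑_{i=1}^n π'_q(i)·log(1 − 1/q^i) = ∑_{j=0}^∞ c_j·q^{−j}, the coefficient c_j equals ∑_{d=1}^n (1/(j+d))·∑_{r | (j+d)/d, r ≤ n/d} μ(r); in particular c_0 = ∑_{d=1}^n 1/d, and c_j = 0 for all 1 ≤ j ≤ n/2. -/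
open Finset

/-- Gauss' formula `π'_q(i) = (1/i) ∑_{d∣i} q^d μ(i/d)` for the number of monic irreducible
polynomials of degree `i` over `F_q`, as a real-valued function of `q`. -/
noncomputable def gaussPi (q : ℝ) (i : ℕ) : ℝ :=
  (1 / (i : ℝ)) * ∑ d ∈ i.divisors, q ^ d * ((ArithmeticFunction.moebius (i / d) : ℤ) : ℝ)

/-- The coefficient `c_j` in the expansion `−∑_{i=1}^n π'_q(i) log(1 − 1/qⁱ) = ∑_j c_j q^{−j}`:
`c_j = ∑_{d=1}^n (1/(j+d)) ∑_{r ∣ (j+d)/d, r ≤ n/d} μ(r)` (the inner sum being empty unless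
`d ∣ j + d`). -/
noncomputable def mertensCoeff (n j : ℕ) : ℝ :=
  ∑ d ∈ Icc 1 n, (1 / ((j : ℝ) + d)) *
    (if d ∣ j + d then
      ∑ r ∈ ((j + d) / d).divisors.filter (fun r => r * d ≤ n),
        ((ArithmeticFunction.moebius r : ℤ) : ℝ)
     else 0)

/-!
Expanding `log (1 - q⁻ⁱ) = -∑_{k ≥ 1} q^(-ik) / k` and Gauss' formula turns the left-hand side
into a sum over pairs `(d, r)` with `d r ≤ n` of `μ(r) q^d / (d r) · ∑_{k ≥ 1} q^(-drk) / k`.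
The `k`-th term is a multiple of `q^(-j)` with `j + d = d r k`, and its coefficient
`μ(r) / (d r k)` is `μ(r) / (j + d)`; collecting the pairs with fixed `d` gives `c_j`.
For `1 ≤ j ≤ n / 2` and `d ∣ j`, every divisor `r` of `m = (j + d) / d ≥ 2` has
`r d ≤ j + d ≤ n`, so the inner sum is the full `∑_{r ∣ m} μ(r) = 0`.
-/

open scoped ArithmeticFunction.Moebius

def mulLePairs (n : ℕ) : Finset (ℕ × ℕ) :=
  (Icc 1 n ×ˢ Icc 1 n).filter (fun p => p.1 * p.2 ≤ n)

lemma pos_of_mem_mulLePairs {n : ℕ} {p : ℕ × ℕ} (hp : p ∈ mulLePairs n) : 0 < p.1 ∧ 0 < p.2 := by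
  simp only [mulLePairs, mem_filter, mem_product, mem_Icc] at hp
  omega

lemma sum_Icc_sum_divisorsAntidiagonal {M : Type*} [AddCommMonoid M] (n : ℕ) (f : ℕ × ℕ → M) :
    ∑ i ∈ Icc 1 n, ∑ p ∈ i.divisorsAntidiagonal, f p = ∑ p ∈ mulLePairs n, f p := by
  rw [sum_comm' (t' := mulLePairs n) (s' := fun p => {p.1 * p.2})]
  · simp
  · rintro i ⟨d, r⟩
    simp only [mem_Icc, Nat.mem_divisorsAntidiagonal, mulLePairs, mem_filter, mem_product,
      mem_singleton]
    constructor
    · rintro ⟨⟨-, hn⟩, rfl, hdr⟩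
      obtain ⟨hd, hr⟩ := CanonicallyOrderedAdd.mul_pos.mp (Nat.pos_of_ne_zero hdr)
      exact ⟨rfl, ⟨⟨hd, (Nat.le_mul_of_pos_right d hr).trans hn⟩, hr,
        (Nat.le_mul_of_pos_left r hd).trans hn⟩, hn⟩
    · rintro ⟨rfl, ⟨⟨hd, -⟩, hr, -⟩, hn⟩
      exact ⟨⟨Nat.mul_pos hd hr, hn⟩, rfl, (Nat.mul_pos hd hr).ne'⟩

-- The contribution of the pair `(d, r)` to `c_j`;
-- `d * r ∣ j + d` means `d ∣ j + d ∧ r ∣ (j + d) / d`.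
noncomputable def mertensPairCoeff (d r j : ℕ) : ℝ :=
  if d * r ∣ j + d then (μ r : ℝ) / (j + d) else 0

lemma sum_mulLePairs_mertensPairCoeff (n j : ℕ) :
    ∑ p ∈ mulLePairs n, mertensPairCoeff p.1 p.2 j = mertensCoeff n j := by
  rw [mulLePairs, sum_filter, sum_product, mertensCoeff]
  refine sum_congr rfl fun d hd => ?_
  have hd : 0 < d := (mem_Icc.mp hd).1
  split_ifs with hdvd
  · obtain ⟨m, hm⟩ := hdvd
    have hm0 : m ≠ 0 := by rintro rfl; omega
    rw [hm, Nat.mul_div_cancel_left m hd, mul_sum]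
    simp only [mertensPairCoeff, hm, Nat.mul_dvd_mul_iff_left hd, ← ite_and, ← sum_filter]
    refine sum_congr ?_ fun r _ => ?_
    · ext r
      simp only [mem_filter, mem_Icc, Nat.mem_divisors, mul_comm r d]
      constructor
      · rintro ⟨-, hn, hrm⟩
        exact ⟨⟨hrm, hm0⟩, hn⟩
      · rintro ⟨⟨hrm, -⟩, hn⟩
        exact ⟨⟨Nat.pos_of_dvd_of_pos hrm (Nat.pos_of_ne_zero hm0),
          (Nat.le_mul_of_pos_left r hd).trans hn⟩, hn, hrm⟩
    · rw [one_div_mul_eq_div]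
  · rw [mul_zero]
    refine sum_eq_zero fun r _ => ?_
    have : ¬d * r ∣ j + d := fun h => hdvd ((dvd_mul_right d r).trans h)
    simp [mertensPairCoeff, this]

lemma hasSum_mertensPairCoeff_mul_pow {x : ℝ} (hx : |x| < 1) {d r : ℕ} (hd : 0 < d)
    (hr : 0 < r) :
    HasSum (fun j => mertensPairCoeff d r j * x ^ (j + d))
      ((μ r : ℝ) / (d * r) * -Real.log (1 - x ^ (d * r))) := by
  -- Only the indices `j = d r (k + 1) - d` contribute, with the `k`-th term of the series of
  -- `-log (1 - x ^ (d r))` scaled by `μ r / (d r)`.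
  set g : ℕ → ℕ := fun k => d * r * (k + 1) - d
  have hg : ∀ k, g k + d = d * r * (k + 1) := fun k => Nat.sub_add_cancel
    ((Nat.le_mul_of_pos_right d hr).trans (Nat.le_mul_of_pos_right _ k.succ_pos))
  have hg_inj : Function.Injective g := fun a b hab => by
    have : d * r * (a + 1) = d * r * (b + 1) := by rw [← hg a, ← hg b, hab]
    have := Nat.eq_of_mul_eq_mul_left (Nat.mul_pos hd hr) this
    omega
  have hsupp : ∀ j ∉ Set.range g, mertensPairCoeff d r j * x ^ (j + d) = 0 := by
    intro j hj
    rw [mertensPairCoeff, if_neg, zero_mul]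
    rintro ⟨m, hm⟩
    obtain ⟨k, rfl⟩ : ∃ k, m = k + 1 := Nat.exists_eq_succ_of_ne_zero (by rintro rfl; omega)
    exact hj ⟨k, by have := hg k; omega⟩
  rw [← hg_inj.hasSum_iff hsupp]
  have hxdr : |x ^ (d * r)| < 1 := by
    rw [abs_pow]; exact pow_lt_one₀ (abs_nonneg x) hx (Nat.mul_pos hd hr).ne'
  refine ((Real.hasSum_pow_div_log_of_abs_lt_one hxdr).mul_left _).congr_fun fun k => ?_
  have hgR : ((g k : ℕ) : ℝ) + d = d * r * (k + 1) := by exact_mod_cast hg k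
  simp only [Function.comp, mertensPairCoeff, hg, dvd_mul_right, if_true, hgR, ← pow_mul]
  field_simp

lemma gaussPi_mul_neg_log (q : ℝ) (i : ℕ) :
    gaussPi q i * -Real.log (1 - 1 / q ^ i) = ∑ p ∈ i.divisorsAntidiagonal,
      q ^ p.1 * ((μ p.2 : ℝ) / (p.1 * p.2) * -Real.log (1 - q⁻¹ ^ (p.1 * p.2))) := by
  rw [Nat.sum_divisorsAntidiagonal (fun d r =>
      q ^ d * ((μ r : ℝ) / (d * r) * -Real.log (1 - q⁻¹ ^ (d * r)))), gaussPi, mul_sum, sum_mul]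
  refine sum_congr rfl fun d hd => ?_
  have hdi : d * (i / d) = i := Nat.mul_div_cancel' (Nat.dvd_of_mem_divisors hd)
  have hdiR : (d : ℝ) * (i / d : ℕ) = i := by exact_mod_cast hdi
  rw [hdi, hdiR, inv_pow, one_div (q ^ i)]
  ring

theorem hasSum_mertensCoeff (n : ℕ) {q : ℝ} (hq : 1 < q) :
    HasSum (fun j : ℕ => mertensCoeff n j * q ^ (-(j : ℤ)))
      (-(∑ i ∈ Icc 1 n, gaussPi q i * Real.log (1 - 1 / q ^ i))) := by
  have hx : |q⁻¹| < 1 := by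
    rw [abs_inv, abs_of_pos (zero_lt_one.trans hq)]; exact inv_lt_one_of_one_lt₀ hq
  have hpair : ∀ p ∈ mulLePairs n, HasSum (fun j => mertensPairCoeff p.1 p.2 j * q⁻¹ ^ j)
      (q ^ p.1 * ((μ p.2 : ℝ) / (p.1 * p.2) * -Real.log (1 - q⁻¹ ^ (p.1 * p.2)))) := by
    intro p hp
    obtain ⟨hd, hr⟩ := pos_of_mem_mulLePairs hp
    refine ((hasSum_mertensPairCoeff_mul_pow hx hd hr).mul_left _).congr_fun fun j => ?_
    rw [pow_add, inv_pow q p.1]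
    field_simp
  convert hasSum_sum hpair using 1
  · funext j
    rw [← sum_mul, sum_mulLePairs_mertensPairCoeff, zpow_neg, zpow_natCast, inv_pow]
  · rw [← sum_Icc_sum_divisorsAntidiagonal, ← sum_neg_distrib]
    simp only [← mul_neg, gaussPi_mul_neg_log]

lemma sum_divisors_moebius_eq_zero {m : ℕ} (hm : m ≠ 1) : ∑ r ∈ m.divisors, (μ r : ℝ) = 0 := by
  have h := congrArg (· m) ArithmeticFunction.moebius_mul_coe_zeta
  simp only [ArithmeticFunction.coe_mul_zeta_apply, ArithmeticFunction.one_apply_ne hm] at h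
  exact_mod_cast h

lemma mertensCoeff_zero (n : ℕ) : mertensCoeff n 0 = ∑ d ∈ Icc 1 n, (1 : ℝ) / d := by
  refine sum_congr rfl fun d hd => ?_
  have hd := mem_Icc.mp hd
  simp [Nat.div_self hd.1, filter_singleton, hd.2]

lemma mertensCoeff_eq_zero {n j : ℕ} (hj : 0 < j) (hjn : 2 * j ≤ n) : mertensCoeff n j = 0 := by
  refine sum_eq_zero fun d hd => ?_
  split_ifs with hdvd
  · obtain ⟨m, hm⟩ := hdvd
    have hd : 0 < d := (mem_Icc.mp hd).1
    have hdj : d ≤ j := Nat.le_of_dvd hj ((Nat.dvd_add_self_right).mp ⟨m, hm⟩)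
    have hm1 : m ≠ 1 := by rintro rfl; omega
    have hall : ∀ r ∈ m.divisors, r * d ≤ n := fun r hr =>
      calc r * d ≤ m * d := Nat.mul_le_mul_right d (Nat.divisor_le hr)
        _ = j + d := by rw [hm, mul_comm]
        _ ≤ n := by omega
    rw [hm, Nat.mul_div_cancel_left m hd, filter_true_of_mem hall,
      sum_divisors_moebius_eq_zero hm1, mul_zero]
  · rw [mul_zero]

theorem stmt_7_general (n : ℕ) (q : ℝ) (hq : 1 < q) :
    (-(∑ i ∈ Icc 1 n, gaussPi q i * Real.log (1 - 1 / q ^ i)) =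
        ∑' j : ℕ, mertensCoeff n j * q ^ (-(j : ℤ))) ∧
      mertensCoeff n 0 = (∑ d ∈ Icc 1 n, (1 : ℝ) / d) ∧
      ∀ j : ℕ, 1 ≤ j → 2 * j ≤ n → mertensCoeff n j = 0 :=
  ⟨(hasSum_mertensCoeff n hq).tsum_eq.symm, mertensCoeff_zero n,
    fun _ hj hjn => mertensCoeff_eq_zero hj hjn⟩

theorem stmt_7 (n : ℕ) (hn : 1 ≤ n) (q : ℝ) (hq : 1 < q) :
    (-(∑ i ∈ Icc 1 n, gaussPi q i * Real.log (1 - 1 / q ^ i)) =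
        ∑' j : ℕ, mertensCoeff n j * q ^ (-(j : ℤ))) ∧
      mertensCoeff n 0 = (∑ d ∈ Icc 1 n, (1 : ℝ) / d) ∧
      ∀ j : ℕ, 1 ≤ j → 2 * j ≤ n → mertensCoeff n j = 0 :=
  stmt_7_general n q hq
end

section
/- For every prime power q, F(I_{2,q}) ≤ ζ(3) + (1/2)·Li₂(1/q), where Li₂(x) = ∑_{k=1}^∞ x^k/k². -/
open Polynomial

/-- The number of irreducible factors of a polynomial, counted with multiplicity. -/
noncomputable def bigOmega {F : Type*} [Field F] (f : F[X]) : ℕ :=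
  (UniqueFactorizationMonoid.factors f).card

/-- The dilogarithm `Li₂(x) = ∑_{k≥1} x^k / k²`. -/
noncomputable def dilog (x : ℝ) : ℝ := ∑' k : ℕ, x ^ (k + 1) / (k + 1) ^ 2

/-!
Write each `f` with `bigOmega f = 2` as `P * Q` with `P ≤ Q` monic irreducible (for any linear
order). Ordered pairs count such an `f` twice unless it is a square, so with
`w f = 1 / (q ^ deg f * deg f)` we get `2 F(I₂) ≤ ∑_{P,Q} w (P Q) + ∑_P w (P²)`. The distinct monic
irreducibles of degree `m` all divide `X ^ q ^ m - X`, so there are at most `q ^ m / m` of them.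
Hence the first sum is at most `∑_{m,k ≥ 1} 1 / (m k (m + k)) = 2 ζ(3)` (Euler), and the second at
most `∑_m 1 / (2 m² q ^ m) = Li₂(1/q) / 2`; so in fact `F(I₂) ≤ ζ(3) + Li₂(1/q) / 4`.
-/

open Filter Finset Topology UniqueFactorizationMonoid
open scoped ENNReal

theorem hasSum_sub_succ_of_antitone {f : ℕ → ℝ} (hf : Antitone f)
    (hlim : Tendsto f atTop (𝓝 0)) : HasSum (fun n ↦ f n - f (n + 1)) (f 0) := by
  rw [hasSum_iff_tendsto_nat_of_nonneg fun n ↦ sub_nonneg.2 (hf n.le_succ)]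
  simp_rw [Finset.sum_range_sub']
  simpa using tendsto_const_nhds.sub hlim

theorem hasSum_sub_add_of_antitone {f : ℕ → ℝ} (hf : Antitone f)
    (hlim : Tendsto f atTop (𝓝 0)) (c : ℕ) :
    HasSum (fun n ↦ f n - f (n + c)) (∑ i ∈ range c, f i) := by
  have hshift (i : ℕ) : HasSum (fun n ↦ f (n + i) - f (n + i + 1)) (f i) := by
    simpa [add_right_comm] using hasSum_sub_succ_of_antitone (f := fun n ↦ f (n + i))
      (fun a b hab ↦ hf (by omega)) (hlim.comp (tendsto_add_atTop_nat i))
  refine (hasSum_sum fun i _ ↦ hshift i).congr_fun fun n ↦ ?_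
  simpa [add_assoc] using (Finset.sum_range_sub' (fun i ↦ f (n + i)) c).symm

theorem hasSum_div_mul_add {a : ℝ} (ha : 0 < a) (c : ℕ) :
    HasSum (fun n : ℕ ↦ c / ((n + a) * (n + a + c))) (∑ i ∈ range c, 1 / (i + a)) := by
  have hanti : Antitone fun n : ℕ ↦ 1 / ((n : ℝ) + a) := fun m n hmn ↦
    one_div_le_one_div_of_le (by positivity) (by gcongr)
  have hlim : Tendsto (fun n : ℕ ↦ 1 / ((n : ℝ) + a)) atTop (𝓝 0) := by
    simp only [one_div]
    exact (tendsto_atTop_add_const_right atTop a tendsto_natCast_atTop_atTop).inv_tendsto_atTop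
  refine (hasSum_sub_add_of_antitone hanti hlim c).congr_fun fun n ↦ ?_
  push_cast
  field_simp
  ring

theorem ENNReal.tsum_ofReal_eq {α : Type*} {f : α → ℝ} {r : ℝ} (hf : ∀ a, 0 ≤ f a)
    (h : HasSum f r) : ∑' a, ENNReal.ofReal (f a) = ENNReal.ofReal r := by
  rw [← ENNReal.ofReal_tsum_of_nonneg hf h.summable, h.tsum_eq]

theorem ENNReal.tsum_prod_eq_tsum_sum_antidiagonal (f : ℕ × ℕ → ℝ≥0∞) :
    ∑' p, f p = ∑' n, ∑ p ∈ antidiagonal n, f p := by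
  rw [← Finset.HasAntidiagonal.sigmaAntidiagonalEquivProd.tsum_eq, ENNReal.tsum_sigma']
  exact tsum_congr fun n ↦ Finset.tsum_subtype (antidiagonal n) f

theorem harmonic_nonneg (n : ℕ) : 0 ≤ (harmonic n : ℝ) :=
  Rat.cast_nonneg.2 <| sum_nonneg fun _ _ ↦ by positivity

theorem summable_one_div_add_one_pow {p : ℕ} (hp : 1 < p) :
    Summable fun n : ℕ ↦ 1 / ((n : ℝ) + 1) ^ p := by
  simpa using (summable_nat_add_iff 1).2 (Real.summable_one_div_nat_pow.2 hp)

theorem tsum_one_div_mul_add_sq_ne_top :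
    ∑' (m : ℕ) (k : ℕ), ENNReal.ofReal (1 / (((m : ℝ) + 1) * ((m : ℝ) + k + 2) ^ 2)) ≠ ∞ := by
  have hrow (m : ℕ) : ∑' k : ℕ, ENNReal.ofReal (1 / (((m : ℝ) + 1) * ((m : ℝ) + k + 2) ^ 2)) ≤
      ENNReal.ofReal (1 / ((m : ℝ) + 1) ^ 2) := by
    have htel := (hasSum_div_mul_add (a := (m : ℝ) + 1) (by positivity) 1).mul_left
      (1 / ((m : ℝ) + 1))
    simp only [Nat.cast_one, range_one, sum_singleton, CharP.cast_eq_zero, zero_add] at htel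
    rw [div_mul_div_comm, one_mul, ← sq] at htel
    rw [← ENNReal.tsum_ofReal_eq (fun k ↦ by positivity) htel]
    refine ENNReal.tsum_le_tsum fun k ↦ ENNReal.ofReal_le_ofReal ?_
    rw [div_mul_div_comm, one_mul]
    gcongr 1 / ?_
    nlinarith
  exact ne_top_of_le_ne_top (summable_one_div_add_one_pow one_lt_two).tsum_ofReal_ne_top
    (ENNReal.tsum_le_tsum hrow)

theorem tsum_tsum_one_div_mul_add_sq_eq :
    ∑' (m : ℕ) (k : ℕ), ENNReal.ofReal (1 / (((m : ℝ) + 1) * ((m : ℝ) + k + 2) ^ 2)) =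
      ∑' n : ℕ, ENNReal.ofReal (harmonic n / ((n : ℝ) + 1) ^ 2) := by
  rw [← ENNReal.tsum_prod' (f := fun p : ℕ × ℕ ↦
      ENNReal.ofReal (1 / (((p.1 : ℝ) + 1) * ((p.1 : ℝ) + p.2 + 2) ^ 2))),
    ENNReal.tsum_prod_eq_tsum_sum_antidiagonal]
  conv_rhs => rw [tsum_eq_zero_add' ENNReal.summable]
  simp only [harmonic_zero, Rat.cast_zero, zero_div, ENNReal.ofReal_zero, zero_add]
  refine tsum_congr fun n ↦ ?_
  rw [← ENNReal.ofReal_sum_of_nonneg fun _ _ ↦ by positivity]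
  congr 1
  rw [Finset.Nat.sum_antidiagonal_eq_sum_range_succ_mk, harmonic]
  push_cast
  rw [Finset.sum_div]
  refine Finset.sum_congr rfl fun m hm ↦ ?_
  rw [Nat.cast_sub (by grind), add_sub_cancel, one_div, mul_inv, div_eq_mul_inv]
  ring

theorem hasSum_one_div_mul_mul_add (k : ℕ) :
    HasSum (fun m : ℕ ↦ 1 / (((m : ℝ) + 1) * ((k : ℝ) + 1) * ((m : ℝ) + k + 2)))
      (harmonic (k + 1) / ((k : ℝ) + 1) ^ 2) := by
  have hH : (harmonic (k + 1) : ℝ) = ∑ i ∈ range (k + 1), 1 / ((i : ℝ) + 1) := by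
    simp [harmonic]
  rw [hH]
  refine ((hasSum_div_mul_add one_pos (k + 1)).div_const _).congr_fun fun m ↦ ?_
  push_cast
  field_simp
  ring

theorem tsum_tsum_one_div_mul_mul_add_eq_add :
    ∑' (m : ℕ) (k : ℕ), ENNReal.ofReal (1 / (((m : ℝ) + 1) * ((k : ℝ) + 1) * ((m : ℝ) + k + 2))) =
      ∑' n : ℕ, ENNReal.ofReal (harmonic n / ((n : ℝ) + 1) ^ 2) +
        ∑' n : ℕ, ENNReal.ofReal (1 / ((n : ℝ) + 1) ^ 3) := by
  rw [ENNReal.tsum_comm, ← ENNReal.tsum_add]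
  refine tsum_congr fun k ↦ ?_
  rw [ENNReal.tsum_ofReal_eq (fun m ↦ by positivity) (hasSum_one_div_mul_mul_add k),
    ← ENNReal.ofReal_add (div_nonneg (harmonic_nonneg k) (by positivity)) (by positivity)]
  congr 1
  rw [harmonic_succ]
  push_cast
  field_simp

theorem tsum_tsum_one_div_mul_mul_add_eq :
    ∑' (m : ℕ) (k : ℕ), ENNReal.ofReal (1 / (((m : ℝ) + 1) * ((k : ℝ) + 1) * ((m : ℝ) + k + 2))) =
      2 * ∑' n : ℕ, ENNReal.ofReal (1 / ((n : ℝ) + 1) ^ 3) := by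
  -- The sum `S` equals `2 U` with `U = ∑ 1 / (m (m + k) ^ 2)`, since
  -- `1 / (m k (m + k)) = (1 / m + 1 / k) / (m + k) ^ 2`, and it equals `U + ζ(3)` by summing
  -- over `m` first; as `U` is finite, `U = ζ(3)`.
  have hsym : ∑' (m : ℕ) (k : ℕ),
      ENNReal.ofReal (1 / (((m : ℝ) + 1) * ((k : ℝ) + 1) * ((m : ℝ) + k + 2))) =
      ∑' (m : ℕ) (k : ℕ), ENNReal.ofReal (1 / (((m : ℝ) + 1) * ((m : ℝ) + k + 2) ^ 2)) +
        ∑' (m : ℕ) (k : ℕ), ENNReal.ofReal (1 / (((k : ℝ) + 1) * ((k : ℝ) + m + 2) ^ 2)) := by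
    rw [← ENNReal.tsum_add]
    refine tsum_congr fun m ↦ ?_
    rw [← ENNReal.tsum_add]
    refine tsum_congr fun k ↦ ?_
    rw [← ENNReal.ofReal_add (by positivity) (by positivity)]
    congr 1
    field_simp
    ring
  rw [ENNReal.tsum_comm
    (f := fun m k : ℕ ↦ ENNReal.ofReal (1 / (((k : ℝ) + 1) * ((k : ℝ) + m + 2) ^ 2))),
    tsum_tsum_one_div_mul_add_sq_eq] at hsym
  have hTZ := tsum_tsum_one_div_mul_mul_add_eq_add.symm.trans hsym
  rw [ENNReal.add_right_inj
    (tsum_tsum_one_div_mul_add_sq_eq ▸ tsum_one_div_mul_add_sq_ne_top)] at hTZ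
  rw [hsym, ← hTZ, two_mul]

theorem ENNReal.two_mul_tsum_fst_le_snd {α : Type*} [LinearOrder α] (w : α → α → ℝ≥0∞)
    (hw : ∀ a b, w a b = w b a) :
    2 * ∑' p : {p : α × α // p.1 ≤ p.2}, w p.1.1 p.1.2 = ∑' p : α × α, w p.1 p.2 + ∑' a, w a a := by
  have hswap : ∑' p : {p : α × α // p.1 ≤ p.2}, w p.1.1 p.1.2 =
      ∑' p : {p : α × α // p.2 ≤ p.1}, w p.1.1 p.1.2 := by
    rw [← ((Equiv.prodComm α α).subtypeEquiv fun _ ↦ Iff.rfl).tsum_eq]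
    exact tsum_congr fun p ↦ hw _ _
  have hle : ∑' p : {p : α × α // p.1 ≤ p.2}, w p.1.1 p.1.2 =
      ∑' p, {p : α × α | p.1 ≤ p.2}.indicator (fun p ↦ w p.1 p.2) p :=
    _root_.tsum_subtype _ (fun p : α × α ↦ w p.1 p.2)
  have hge : ∑' p : {p : α × α // p.2 ≤ p.1}, w p.1.1 p.1.2 =
      ∑' p, {p : α × α | p.2 ≤ p.1}.indicator (fun p ↦ w p.1 p.2) p :=
    _root_.tsum_subtype _ (fun p : α × α ↦ w p.1 p.2)
  have hdiag : ∑' a, w a a = ∑' p, (Set.diagonal α).indicator (fun p ↦ w p.1 p.2) p := by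
    rw [← _root_.tsum_subtype, ← Set.range_diag,
      tsum_range (fun p : α × α ↦ w p.1 p.2) Function.diag_injective]
    rfl
  rw [two_mul]
  nth_rw 2 [hswap]
  rw [hdiag, hle, hge, ← ENNReal.tsum_add, ← ENNReal.tsum_add]
  refine tsum_congr fun p ↦ ?_
  simp only [Set.indicator_apply, Set.mem_ofPred_eq, Set.mem_diagonal_iff]
  rcases lt_trichotomy p.1 p.2 with h | h | h
  · simp [h.le, h.not_ge, h.ne]
  · simp [h]
  · simp [h.le, h.not_ge, h.ne']

section MonicIrreducible

variable {F : Type*} [Field F]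

abbrev MonicIrreducible (F : Type*) [Field F] := {P : F[X] // P.Monic ∧ Irreducible P}

theorem exists_mul_eq_of_bigOmega_eq_two {f : F[X]} (hf : f.Monic) (h2 : bigOmega f = 2) :
    ∃ P Q : MonicIrreducible F, P.1 * Q.1 = f := by
  classical
  have hcard : Multiset.card (normalizedFactors f) = 2 := by
    rw [normalizedFactors, Multiset.card_map]
    exact h2
  obtain ⟨a, b, hab⟩ := Multiset.card_eq_two.1 hcard
  have hmem (x : F[X]) (hx : x ∈ normalizedFactors f) : x.Monic ∧ Irreducible x :=
    have := (Polynomial.mem_normalizedFactors_iff hf.ne_zero).1 hx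
    ⟨this.2.1, this.1⟩
  refine ⟨⟨a, hmem a (by simp [hab])⟩, ⟨b, hmem b (by simp [hab])⟩, ?_⟩
  simpa [hab, hf.leadingCoeff] using leadingCoeff_mul_prod_normalizedFactors f

theorem mul_card_le_card_pow [Finite F] {m : ℕ} (s : Finset F[X])
    (hs : ∀ P ∈ s, P.Monic ∧ Irreducible P ∧ P.natDegree = m) :
    m * s.card ≤ Nat.card F ^ m := by
  rcases eq_or_ne m 0 with rfl | hm
  · simp
  have hq : 1 < Nat.card F := Finite.one_lt_card
  have hdvd : ∏ P ∈ s, P ∣ X ^ Nat.card F ^ m - X := by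
    refine Finset.prod_dvd_of_coprime (fun P hP Q hQ hPQ ↦ ?_) fun P hP ↦ ?_
    · refine ((hs P hP).2.1.coprime_iff_not_dvd).2 fun hPQ' ↦ hPQ ?_
      exact eq_of_monic_of_associated (hs P hP).1 (hs Q hQ).1
        ((hs P hP).2.1.associated_of_dvd (hs Q hQ).2.1 hPQ')
    · rw [← (hs P hP).2.2]
      exact (hs P hP).2.1.natDegree_dvd_iff_dvd_X_pow_card_pow_sub_X.1 dvd_rfl
  have := natDegree_le_of_dvd hdvd (FiniteField.X_pow_card_pow_sub_X_ne_zero F hm hq)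
  rwa [natDegree_prod_of_monic _ _ fun P hP ↦ (hs P hP).1,
    Finset.sum_congr rfl fun P hP ↦ (hs P hP).2.2, Finset.sum_const, smul_eq_mul, mul_comm,
    FiniteField.X_pow_card_pow_sub_X_natDegree_eq F hm hq] at this

theorem tsum_monicIrreducible_le [Finite F] (v : ℕ → ℝ≥0∞) :
    ∑' P : MonicIrreducible F, v P.1.natDegree ≤
      ∑' m : ℕ, ENNReal.ofReal ((Nat.card F : ℝ) ^ (m + 1) / (m + 1)) * v (m + 1) := by
  rw [← ENNReal.tsum_fiberwise _ fun P : MonicIrreducible F ↦ P.1.natDegree,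
    tsum_eq_zero_add' ENNReal.summable,
    ENNReal.tsum_eq_zero.2 fun P ↦ absurd P.2 P.1.2.2.natDegree_pos.ne', zero_add]
  refine ENNReal.tsum_le_tsum fun m ↦ ?_
  rw [ENNReal.tsum_eq_iSup_sum]
  refine iSup_le fun s ↦ ?_
  have hcard := mul_card_le_card_pow (F := F) (m := m + 1)
    (s.map ((Function.Embedding.subtype _).trans (Function.Embedding.subtype _)))
    (by simp only [Finset.mem_map]; rintro _ ⟨P, -, rfl⟩; exact ⟨P.1.2.1, P.1.2.2, P.2⟩)
  rw [Finset.card_map] at hcard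
  calc ∑ P ∈ s, v P.1.1.natDegree = s.card * v (m + 1) := by
        rw [Finset.sum_congr rfl fun P _ ↦ congrArg v P.2, Finset.sum_const, nsmul_eq_mul]
    _ ≤ _ := by
        gcongr
        rw [← ENNReal.ofReal_natCast]
        refine ENNReal.ofReal_le_ofReal ((le_div_iff₀ (by positivity)).2 ?_)
        exact_mod_cast (mul_comm _ _).trans_le hcard

theorem two_mul_tsum_bigOmega_eq_two_le (g : F[X] → ℝ≥0∞) :
    2 * ∑' f : {f : F[X] // f.Monic ∧ bigOmega f = 2}, g f ≤
      ∑' p : MonicIrreducible F × MonicIrreducible F, g (p.1.1 * p.2.1) +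
        ∑' P : MonicIrreducible F, g (P.1 * P.1) := by
  have : LinearOrder (MonicIrreducible F) := IsWellOrder.linearOrder WellOrderingRel
  have hsorted (f : {f : F[X] // f.Monic ∧ bigOmega f = 2}) :
      ∃ p : {p : MonicIrreducible F × MonicIrreducible F // p.1 ≤ p.2}, p.1.1.1 * p.1.2.1 = f := by
    obtain ⟨P, Q, hPQ⟩ := exists_mul_eq_of_bigOmega_eq_two f.2.1 f.2.2
    rcases le_total P Q with h | h
    · exact ⟨⟨(P, Q), h⟩, hPQ⟩
    · exact ⟨⟨(Q, P), h⟩, (mul_comm _ _).trans hPQ⟩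
  choose j hj using hsorted
  have hinj : j.Injective := fun f f' h ↦
    Subtype.ext <| (hj f).symm.trans <| (congrArg (fun p ↦ p.1.1.1 * p.1.2.1) h).trans (hj f')
  calc 2 * ∑' f : {f : F[X] // f.Monic ∧ bigOmega f = 2}, g f
        = 2 * ∑' f, g ((j f).1.1.1 * (j f).1.2.1) := by simp only [hj]
    _ ≤ 2 * ∑' p : {p : MonicIrreducible F × MonicIrreducible F // p.1 ≤ p.2},
          g (p.1.1.1 * p.1.2.1) :=
        mul_le_mul_right (ENNReal.tsum_comp_le_tsum_of_injective hinj _) 2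
    _ = _ := ENNReal.two_mul_tsum_fst_le_snd (fun P Q : MonicIrreducible F ↦ g (P.1 * Q.1))
        fun P Q ↦ by rw [mul_comm]

end MonicIrreducible

theorem summable_dilog {x : ℝ} (hx : |x| ≤ 1) :
    Summable fun k : ℕ ↦ x ^ (k + 1) / ((k : ℝ) + 1) ^ 2 := by
  refine (summable_one_div_add_one_pow one_lt_two).of_norm_bounded fun k ↦ ?_
  rw [norm_div, norm_pow, Real.norm_eq_abs, Real.norm_eq_abs,
    abs_of_pos (by positivity : (0 : ℝ) < ((k : ℝ) + 1) ^ 2)]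
  gcongr
  exact pow_le_one₀ (abs_nonneg x) hx

theorem dilog_nonneg {x : ℝ} (hx : 0 ≤ x) : 0 ≤ dilog x :=
  tsum_nonneg fun _ ↦ by positivity

noncomputable def degreeWeight (q : ℝ) (n : ℕ) : ℝ≥0∞ := ENNReal.ofReal (1 / (q ^ n * n))

section DegreeWeight

variable {F : Type*} [Field F] [Finite F]

theorem tsum_prod_degreeWeight_le :
    ∑' p : MonicIrreducible F × MonicIrreducible F,
        degreeWeight (Nat.card F) (p.1.1 * p.2.1).natDegree ≤
      2 * ∑' n : ℕ, ENNReal.ofReal (1 / ((n : ℝ) + 1) ^ 3) := by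
  have hq : (0 : ℝ) < Nat.card F := Nat.cast_pos.2 Nat.card_pos
  calc ∑' p : MonicIrreducible F × MonicIrreducible F,
        degreeWeight (Nat.card F) (p.1.1 * p.2.1).natDegree
      = ∑' (P : MonicIrreducible F) (Q : MonicIrreducible F),
          degreeWeight (Nat.card F) (P.1.natDegree + Q.1.natDegree) := by
        rw [ENNReal.tsum_prod']
        exact tsum_congr fun P ↦ tsum_congr fun Q ↦ by
          rw [natDegree_mul P.2.2.ne_zero Q.2.2.ne_zero]
    _ ≤ ∑' (P : MonicIrreducible F) (k : ℕ),
          ENNReal.ofReal ((Nat.card F : ℝ) ^ (k + 1) / (k + 1)) *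
            degreeWeight (Nat.card F) (P.1.natDegree + (k + 1)) :=
        ENNReal.tsum_le_tsum fun P ↦
          tsum_monicIrreducible_le fun n ↦ degreeWeight (Nat.card F) (P.1.natDegree + n)
    _ ≤ ∑' m : ℕ, ENNReal.ofReal ((Nat.card F : ℝ) ^ (m + 1) / (m + 1)) * ∑' k : ℕ,
          ENNReal.ofReal ((Nat.card F : ℝ) ^ (k + 1) / (k + 1)) *
            degreeWeight (Nat.card F) (m + 1 + (k + 1)) :=
        tsum_monicIrreducible_le fun n ↦ ∑' k : ℕ,
          ENNReal.ofReal ((Nat.card F : ℝ) ^ (k + 1) / (k + 1)) *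
            degreeWeight (Nat.card F) (n + (k + 1))
    _ = ∑' (m : ℕ) (k : ℕ),
          ENNReal.ofReal (1 / (((m : ℝ) + 1) * ((k : ℝ) + 1) * ((m : ℝ) + k + 2))) := by
        refine tsum_congr fun m ↦ ?_
        rw [← ENNReal.tsum_mul_left]
        refine tsum_congr fun k ↦ ?_
        rw [degreeWeight, ← ENNReal.ofReal_mul (by positivity),
          ← ENNReal.ofReal_mul (by positivity), pow_add]
        congr 1
        push_cast
        field_simp
        ring
    _ = _ := tsum_tsum_one_div_mul_mul_add_eq

theorem tsum_sq_degreeWeight_le :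
    ∑' P : MonicIrreducible F, degreeWeight (Nat.card F) (P.1 * P.1).natDegree ≤
      ENNReal.ofReal (dilog (1 / Nat.card F) / 2) := by
  have hq : (1 : ℝ) ≤ Nat.card F := Nat.one_le_cast.2 Nat.card_pos
  have hx : |1 / (Nat.card F : ℝ)| ≤ 1 := by
    rw [abs_of_pos (by positivity)]
    exact div_le_one_of_le₀ hq (by positivity)
  have hdilog := (summable_dilog hx).hasSum.div_const 2
  calc ∑' P : MonicIrreducible F, degreeWeight (Nat.card F) (P.1 * P.1).natDegree
      = ∑' P : MonicIrreducible F, degreeWeight (Nat.card F) (P.1.natDegree + P.1.natDegree) :=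
        tsum_congr fun P ↦ by rw [natDegree_mul P.2.2.ne_zero P.2.2.ne_zero]
    _ ≤ ∑' m : ℕ, ENNReal.ofReal ((Nat.card F : ℝ) ^ (m + 1) / (m + 1)) *
          degreeWeight (Nat.card F) (m + 1 + (m + 1)) :=
        tsum_monicIrreducible_le fun n ↦ degreeWeight (Nat.card F) (n + n)
    _ = _ := by
        rw [dilog, ← ENNReal.tsum_ofReal_eq (fun k ↦ by positivity) hdilog]
        refine tsum_congr fun m ↦ ?_
        rw [degreeWeight, ← ENNReal.ofReal_mul (by positivity), pow_add, one_div_pow]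
        congr 1
        push_cast
        field_simp
        ring

theorem tsum_bigOmega_eq_two_degreeWeight_le :
    ∑' f : {f : F[X] // f.Monic ∧ bigOmega f = 2}, degreeWeight (Nat.card F) f.1.natDegree ≤
      ENNReal.ofReal ((∑' n : ℕ, 1 / ((n : ℝ) + 1) ^ 3) + dilog (1 / Nat.card F) / 4) := by
  have hzeta := ENNReal.tsum_ofReal_eq (fun n ↦ by positivity)
    (summable_one_div_add_one_pow (p := 3) (by norm_num)).hasSum
  have hζ : 0 ≤ ∑' n : ℕ, 1 / ((n : ℝ) + 1) ^ 3 := tsum_nonneg fun n ↦ by positivity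
  have hD : 0 ≤ dilog (1 / Nat.card F) := dilog_nonneg (by positivity)
  refine (ENNReal.mul_le_mul_iff_right two_ne_zero ENNReal.ofNat_ne_top).1 ?_
  calc 2 * ∑' f : {f : F[X] // f.Monic ∧ bigOmega f = 2},
        degreeWeight (Nat.card F) f.1.natDegree
      ≤ 2 * ∑' n : ℕ, ENNReal.ofReal (1 / ((n : ℝ) + 1) ^ 3) +
          ENNReal.ofReal (dilog (1 / Nat.card F) / 2) :=
        (two_mul_tsum_bigOmega_eq_two_le fun f ↦ degreeWeight (Nat.card F) f.natDegree).trans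
          (add_le_add tsum_prod_degreeWeight_le tsum_sq_degreeWeight_le)
    _ = _ := by
        rw [hzeta, ← ENNReal.ofReal_ofNat 2, ← ENNReal.ofReal_mul zero_le_two,
          ← ENNReal.ofReal_add (by positivity) (by positivity), ← ENNReal.ofReal_mul zero_le_two]
        congr 1
        ring

end DegreeWeight

theorem stmt_18_general (q : ℕ)
    (F : Type*) [Field F] [Fintype F] (hF : Fintype.card F = q) :
    (∑' f : {f : F[X] // f.Monic ∧ bigOmega f = 2},
        1 / ((q : ℝ) ^ ((f : F[X]).natDegree) * ((f : F[X]).natDegree))) ≤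
      (∑' n : ℕ, 1 / ((n : ℝ) + 1) ^ 3) + (1 / 2) * dilog (1 / (q : ℝ)) := by
  subst hF
  rw [← Nat.card_eq_fintype_card]
  have hζ : 0 ≤ ∑' n : ℕ, 1 / ((n : ℝ) + 1) ^ 3 := tsum_nonneg fun n ↦ by positivity
  have hD : 0 ≤ dilog (1 / Nat.card F) := dilog_nonneg (by positivity)
  have hsum : (∑' f : {f : F[X] // f.Monic ∧ bigOmega f = 2},
      1 / ((Nat.card F : ℝ) ^ f.1.natDegree * f.1.natDegree)) =
      (∑' f : {f : F[X] // f.Monic ∧ bigOmega f = 2},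
        degreeWeight (Nat.card F) f.1.natDegree).toReal := by
    unfold degreeWeight
    rw [ENNReal.tsum_toReal_eq fun _ ↦ ENNReal.ofReal_ne_top]
    exact tsum_congr fun f ↦ (ENNReal.toReal_ofReal (by positivity)).symm
  rw [hsum]
  refine (ENNReal.toReal_le_of_le_ofReal (by positivity)
    tsum_bigOmega_eq_two_degreeWeight_le).trans ?_
  linarith

theorem stmt_18 (q : ℕ) (hq : IsPrimePow q)
    (F : Type*) [Field F] [Fintype F] (hF : Fintype.card F = q) :
    (∑' f : {f : F[X] // f.Monic ∧ bigOmega f = 2},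
        1 / ((q : ℝ) ^ ((f : F[X]).natDegree) * ((f : F[X]).natDegree))) ≤
      (∑' n : ℕ, 1 / ((n : ℝ) + 1) ^ 3) + (1 / 2) * dilog (1 / (q : ℝ)) :=
  stmt_18_general q F hF
end
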